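/- arXiv:2305.19966 — 9 statements merged into one kernel-verified Lean document; each statement's English description precedes it below -/
import Mathlib

section
/- For every n ∈ ℤ_{≥1}, t > 0, strictly increasing x = (x_1 < … < x_n) ∈ ℝ^n and m = (m_1, …, m_n) ∈ ℤ_{≥1}^n, one has γ1(t,x,m) ≤ γ2(t,x,m). -/
private lemma sum_Icc_id_real (m : ℕ) :
    ∑ r ∈ Finset.Icc 1 m, (r : ℝ) = m * (m + 1) / 2 := by
  induction m with
  | zero => simp
  | succ k ih =>
    rw [Finset.sum_Icc_succ_top (by omega), ih]
    push_cast; ring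

private lemma sum_Icc_sq_real (m : ℕ) :
    ∑ r ∈ Finset.Icc 1 m, (r : ℝ) ^ 2 = m * (m + 1) * (2 * m + 1) / 6 := by
  induction m with
  | zero => simp
  | succ k ih =>
    rw [Finset.sum_Icc_succ_top (by omega), ih]
    push_cast; ring

private lemma blockSum (m : ℕ) (tt b v : ℝ) :
    ∑ r ∈ Finset.Icc 1 m,
      (tt / 2 * (b + ((m : ℝ) + 1) / 2 - (r : ℝ)) ^ 2 + v * (b + ((m : ℝ) + 1) / 2 - (r : ℝ)))
    = (m : ℝ) * tt / 2 * b ^ 2 + ((m : ℝ) ^ 3 - (m : ℝ)) * tt / 24 + (m : ℝ) * v * b := by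
  have h : ∀ r ∈ Finset.Icc 1 m,
      tt / 2 * (b + ((m : ℝ) + 1) / 2 - (r : ℝ)) ^ 2 + v * (b + ((m : ℝ) + 1) / 2 - (r : ℝ))
      = (tt / 2 * (b + ((m : ℝ) + 1) / 2) ^ 2 + v * (b + ((m : ℝ) + 1) / 2))
        + (-(tt * (b + ((m : ℝ) + 1) / 2)) - v) * (r : ℝ) + tt / 2 * (r : ℝ) ^ 2 := by
    intro r _; ring
  rw [Finset.sum_congr rfl h]
  rw [Finset.sum_add_distrib, Finset.sum_add_distrib, ← Finset.mul_sum, ← Finset.mul_sum,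
    Finset.sum_const, sum_Icc_id_real, sum_Icc_sq_real, Nat.card_Icc]
  simp only [Nat.add_sub_cancel, nsmul_eq_mul]
  ring

private def Sf (m : ℕ → ℕ) (j : ℕ) : ℕ := ∑ i ∈ Finset.Icc 1 j, m i

private lemma Sf_zero (m : ℕ → ℕ) : Sf m 0 = 0 := by simp [Sf]

private lemma Sf_mono (m : ℕ → ℕ) : Monotone (Sf m) := fun p q hpq =>
  Finset.sum_le_sum_of_subset (Finset.Icc_subset_Icc_right hpq)

private lemma Sf_succ (m : ℕ → ℕ) (j : ℕ) : Sf m (j + 1) = Sf m j + m (j + 1) :=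
  Finset.sum_Icc_succ_top (by omega) m

private lemma Sf_pred (m : ℕ → ℕ) (j : ℕ) (hj : 1 ≤ j) : Sf m j = Sf m (j - 1) + m j := by
  have h := Sf_succ m (j - 1)
  rwa [show j - 1 + 1 = j by omega] at h

private lemma sum_blocks (S : ℕ → ℕ) (hmono : Monotone S) (hS0 : S 0 = 0) (f : ℕ → ℝ) :
    ∀ n, ∑ k ∈ Finset.Ioc 0 (S n), f k
      = ∑ j ∈ Finset.Icc 1 n, ∑ k ∈ Finset.Ioc (S (j - 1)) (S j), f k := by
  intro n
  induction n with
  | zero => simp [hS0]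
  | succ p ih =>
    rw [Finset.sum_Icc_succ_top (by omega)]
    rw [← Finset.sum_Ioc_consecutive f (Nat.zero_le (S p)) (hmono (Nat.le_succ p))]
    rw [ih]
    simp only [Nat.add_sub_cancel]

private def Jf (n : ℕ) (m : ℕ → ℕ) (k : ℕ) : ℕ :=
  Nat.find (⟨n, Or.inr le_rfl⟩ : ∃ j, k ≤ Sf m j ∨ n ≤ j)

private lemma Jf_spec (n : ℕ) (m : ℕ → ℕ) (k : ℕ) :
    k ≤ Sf m (Jf n m k) ∨ n ≤ Jf n m k :=
  Nat.find_spec (⟨n, Or.inr le_rfl⟩ : ∃ j, k ≤ Sf m j ∨ n ≤ j)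

private lemma Jf_le_of (n : ℕ) (m : ℕ → ℕ) (k j : ℕ) (h : k ≤ Sf m j ∨ n ≤ j) :
    Jf n m k ≤ j := Nat.find_le h

private lemma Jf_min (n : ℕ) (m : ℕ → ℕ) (k j : ℕ) (h : j < Jf n m k) :
    ¬(k ≤ Sf m j ∨ n ≤ j) := Nat.find_min _ h

/-- γ1(t,x,m) ≤ γ2(t,x,m). -/
theorem gamma1_le_gamma2
    (n : ℕ) (hn : 1 ≤ n) (t : ℝ) (ht : 0 < t)
    (x : ℕ → ℝ) (hx : ∀ i, 1 ≤ i → i < n → x i < x (i + 1))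
    (m : ℕ → ℕ) (hm : ∀ i, 1 ≤ i → i ≤ n → 1 ≤ m i)
    (M : ℕ) (hM : M = ∑ i ∈ Finset.Icc 1 n, m i)
    (u : ℕ → ℝ)
    (hu : ∀ j, 1 ≤ j → j ≤ n → ∀ k, (∑ i ∈ Finset.Icc 1 (j - 1), m i) < k →
      k ≤ ∑ i ∈ Finset.Icc 1 j, m i → u k = x j) :
    sInf {c : ℝ | ∃ a : ℕ → ℝ,
        (∀ i, 1 ≤ i → i + 1 ≤ M → a i - a (i + 1) ≥ 1) ∧
        c = ∑ i ∈ Finset.Icc 1 M, (t / 2 * a i ^ 2 + u i * a i)}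
    ≤ sInf {c : ℝ | ∃ b : ℕ → ℝ,
        (∀ i, 1 ≤ i → i + 1 ≤ n → b i - b (i + 1) ≥ ((m i : ℝ) + (m (i + 1) : ℝ)) / 2) ∧
        c = ∑ i ∈ Finset.Icc 1 n, ((m i : ℝ) * t / 2 * (b i + x i / t) ^ 2
            + ((m i : ℝ) ^ 3 - (m i : ℝ)) * t / 24 - (m i : ℝ) * x i ^ 2 / (2 * t))} := by
  have hSn : Sf m n = M := hM.symm
  apply csInf_le_csInf
  · -- bounded below
    refine ⟨∑ i ∈ Finset.Icc 1 M, (-(u i ^ 2) / (2 * t)), ?_⟩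
    rintro c ⟨a, ha, rfl⟩
    apply Finset.sum_le_sum
    intro i _
    rw [div_le_iff₀ (by linarith : (0:ℝ) < 2 * t)]
    nlinarith [sq_nonneg (t * a i + u i)]
  · -- the second set is nonempty
    refine ⟨_, ⟨fun j => -(∑ i ∈ Finset.Icc 1 j, ((m (i - 1) : ℝ) + (m i : ℝ)) / 2), ?_, rfl⟩⟩
    intro i hi1 hi2
    have h := Finset.sum_Icc_succ_top (a := 1) (b := i) (by omega)
      (fun i' => ((m (i' - 1) : ℝ) + (m i' : ℝ)) / 2)
    simp only [Nat.add_sub_cancel] at h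
    have heq : (-(∑ i' ∈ Finset.Icc 1 i, ((m (i' - 1) : ℝ) + (m i' : ℝ)) / 2))
        - (-(∑ i' ∈ Finset.Icc 1 (i + 1), ((m (i' - 1) : ℝ) + (m i' : ℝ)) / 2))
        = ((m i : ℝ) + (m (i + 1) : ℝ)) / 2 := by rw [h]; ring
    exact ge_of_eq heq
  · -- inclusion of value sets
    rintro c ⟨b, hb, rfl⟩
    have hSlt : ∀ j, j < n → Sf m j < Sf m (j + 1) := by
      intro j hj
      have h1 : 1 ≤ m (j + 1) := hm (j + 1) (by omega) (by omega)
      have := Sf_succ m j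
      omega
    have hJle : ∀ k, Jf n m k ≤ n := fun k => Jf_le_of n m k n (Or.inr le_rfl)
    have hkJ : ∀ k, k ≤ M → k ≤ Sf m (Jf n m k) := by
      intro k hk
      rcases Jf_spec n m k with h | h
      · exact h
      · have he : Jf n m k = n := le_antisymm (hJle k) h
        rw [he, hSn]; exact hk
    have hJ1 : ∀ k, 1 ≤ k → 1 ≤ Jf n m k := by
      intro k hk
      by_contra h
      push_neg at h
      have h0 : Jf n m k = 0 := by omega
      have hs := Jf_spec n m k
      rw [h0, Sf_zero] at hs
      omega
    have hJlt : ∀ k, 1 ≤ k → Sf m (Jf n m k - 1) < k := by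
      intro k hk
      have h1 := hJ1 k hk
      have h2 := Jf_min n m k (Jf n m k - 1) (by omega)
      push_neg at h2
      exact h2.1
    have hJeq : ∀ j, 1 ≤ j → j ≤ n → ∀ k, Sf m (j - 1) < k → k ≤ Sf m j → Jf n m k = j := by
      intro j hj1 hjn k hk1 hk2
      have hle : Jf n m k ≤ j := Jf_le_of n m k j (Or.inl hk2)
      rcases lt_or_eq_of_le hle with hlt | heq
      · exfalso
        have hmo : Sf m (Jf n m k) ≤ Sf m (j - 1) := Sf_mono m (by omega)
        rcases Jf_spec n m k with h | h
        · omega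
        · omega
      · exact heq
    set a : ℕ → ℝ := fun k =>
      b (Jf n m k) + ((m (Jf n m k) : ℝ) + 1) / 2
        - ((k : ℝ) - (Sf m (Jf n m k - 1) : ℝ)) with hadef
    have hgap : ∀ i, 1 ≤ i → i + 1 ≤ M → a i - a (i + 1) ≥ 1 := by
      intro i hi1 hi2
      have hJi1 : 1 ≤ Jf n m i := hJ1 i hi1
      have hJin : Jf n m i ≤ n := hJle i
      have hmono1 : Jf n m i ≤ Jf n m (i + 1) := by
        apply Jf_le_of
        rcases Jf_spec n m (i + 1) with h | h
        · left; omega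
        · right; exact h
      have hstep : Jf n m (i + 1) ≤ Jf n m i + 1 := by
        apply Jf_le_of
        by_cases h : Jf n m i < n
        · left
          have hki : i ≤ Sf m (Jf n m i) := hkJ i (by omega)
          have h1 : 1 ≤ m (Jf n m i + 1) := hm _ (by omega) (by omega)
          have h2 := Sf_succ m (Jf n m i)
          omega
        · right; omega
      rcases (by omega : Jf n m (i + 1) = Jf n m i ∨ Jf n m (i + 1) = Jf n m i + 1) with
        hcase | hcase
      · have he : a i - a (i + 1) = 1 := by
          simp only [hadef, hcase]
          push_cast
          ring
        linarith
      · set j0 := Jf n m i with hj0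
        have hieq : i = Sf m j0 := by
          have h1 : i ≤ Sf m j0 := hkJ i (by omega)
          have h2 := hJlt (i + 1) (by omega)
          rw [hcase] at h2
          simp only [Nat.add_sub_cancel] at h2
          omega
        have hJ1n : j0 + 1 ≤ n := by rw [← hcase]; exact hJle (i + 1)
        have hbj := hb j0 hJi1 hJ1n
        have hp := Sf_pred m j0 hJi1
        have ha1 : a i = b j0 + ((m j0 : ℝ) + 1) / 2 - (m j0 : ℝ) := by
          simp only [hadef]
          rw [← hj0, hieq]
          push_cast [hp]
          ring
        have ha2 : a (i + 1) = b (j0 + 1) + ((m (j0 + 1) : ℝ) + 1) / 2 - 1 := by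
          simp only [hadef, hcase, Nat.add_sub_cancel]
          push_cast
          rw [hieq]
          ring
        rw [ha1, ha2]
        linarith
    refine ⟨a, hgap, ?_⟩
    have hIccIoc : Finset.Icc 1 M = Finset.Ioc 0 M := by
      ext k; simp only [Finset.mem_Icc, Finset.mem_Ioc]; omega
    have hdecomp := sum_blocks (Sf m) (Sf_mono m) (Sf_zero m)
      (fun k => t / 2 * a k ^ 2 + u k * a k) n
    rw [hSn] at hdecomp
    rw [hIccIoc, hdecomp]
    refine (Finset.sum_congr rfl ?_)
    intro j hj
    rw [Finset.mem_Icc] at hj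
    have hSjj := Sf_pred m j hj.1
    have hre : ∑ k ∈ Finset.Ioc (Sf m (j - 1)) (Sf m j), (t / 2 * a k ^ 2 + u k * a k)
        = ∑ r ∈ Finset.Icc 1 (m j),
            (t / 2 * a (Sf m (j - 1) + r) ^ 2 + u (Sf m (j - 1) + r) * a (Sf m (j - 1) + r)) := by
      apply Finset.sum_nbij' (i := fun k => k - Sf m (j - 1)) (j := fun r => Sf m (j - 1) + r)
      · intro k hk; rw [Finset.mem_Ioc] at hk; rw [Finset.mem_Icc]; omega
      · intro r hr; rw [Finset.mem_Icc] at hr; rw [Finset.mem_Ioc]; omega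
      · intro k hk; rw [Finset.mem_Ioc] at hk; omega
      · intro r _; omega
      · intro k hk; rw [Finset.mem_Ioc] at hk
        rw [show Sf m (j - 1) + (k - Sf m (j - 1)) = k by omega]
    have hterm : ∀ r ∈ Finset.Icc 1 (m j),
        t / 2 * a (Sf m (j - 1) + r) ^ 2 + u (Sf m (j - 1) + r) * a (Sf m (j - 1) + r)
        = t / 2 * (b j + ((m j : ℝ) + 1) / 2 - (r : ℝ)) ^ 2
          + x j * (b j + ((m j : ℝ) + 1) / 2 - (r : ℝ)) := by
      intro r hr
      rw [Finset.mem_Icc] at hr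
      have hk1 : Sf m (j - 1) < Sf m (j - 1) + r := by omega
      have hk2 : Sf m (j - 1) + r ≤ Sf m j := by omega
      have hJk : Jf n m (Sf m (j - 1) + r) = j := hJeq j hj.1 hj.2 _ hk1 hk2
      have hu' : u (Sf m (j - 1) + r) = x j := hu j hj.1 hj.2 _ hk1 hk2
      have ha' : a (Sf m (j - 1) + r) = b j + ((m j : ℝ) + 1) / 2 - (r : ℝ) := by
        simp only [hadef, hJk]
        push_cast
        ring
      rw [hu', ha']
    rw [hre, Finset.sum_congr rfl hterm, blockSum (m j) t (b j) (x j)]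
    have htne : t ≠ 0 := ne_of_gt ht
    field_simp
    ring
end

section
/- Suppose a consecutive-block partition of {1, …, n} given by 0 = N_0 < N_1 < ⋯ < N_q = n satisfies the separation condition. Define b ∈ ℝ^n by b_i := −(Σ_{j∈B_k} m_j x_j)/(M_{B_k} t) + ( Σ_{j=i+1}^{N_k} m_j − Σ_{j=N_{k−1}+1}^{i−1} m_j )/2 for N_{k−1} < i ≤ N_k. Then b_i − b_{i+1} = (m_i + m_{i+1})/2 whenever i and i+1 lie in the same block B_k, and b_i − b_{i+1} > (m_i + m_{i+1})/2 whenever i = N_k for some k ∈ {1, …, q−1}. -/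
lemma sum_Icc_bot' {a b : ℕ} (h : a ≤ b) (f : ℕ → ℝ) :
    ∑ j ∈ Finset.Icc a b, f j = f a + ∑ j ∈ Finset.Icc (a + 1) b, f j := by
  rw [← Finset.add_sum_Ioc_eq_sum_Icc h, ← Finset.Icc_add_one_left_eq_Ioc]

lemma sum_Icc_top' {a b : ℕ} (h : a ≤ b + 1) (f : ℕ → ℝ) :
    ∑ j ∈ Finset.Icc a (b + 1), f j = (∑ j ∈ Finset.Icc a b, f j) + f (b + 1) :=
  Finset.sum_Icc_succ_top h f

/-- for a consecutive-block partition satisfying the separation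
condition, the vector `b` defined blockwise has gap exactly `(m_i + m_{i+1})/2`
inside blocks and strictly larger gap between consecutive blocks. -/
theorem b_from_blocks_gaps
    (n : ℕ) (hn : 1 ≤ n) (t : ℝ) (ht : 0 < t)
    (x : ℕ → ℝ) (hx : ∀ i, 1 ≤ i → i < n → x i < x (i + 1))
    (m : ℕ → ℕ) (hm : ∀ i, 1 ≤ i → i ≤ n → 1 ≤ m i)
    (q : ℕ) (hq : 1 ≤ q)
    (N : ℕ → ℕ) (hN0 : N 0 = 0) (hNq : N q = n)
    (hNmono : ∀ k, k < q → N k < N (k + 1))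
    (hsep : ∀ k, 1 ≤ k → k + 1 ≤ q →
      (∑ i ∈ Finset.Icc (N k + 1) (N (k + 1)), (m i : ℝ) * x i)
          / (∑ i ∈ Finset.Icc (N k + 1) (N (k + 1)), (m i : ℝ))
        - (∑ i ∈ Finset.Icc (N (k - 1) + 1) (N k), (m i : ℝ) * x i)
          / (∑ i ∈ Finset.Icc (N (k - 1) + 1) (N k), (m i : ℝ))
      > t / 2 * ((∑ i ∈ Finset.Icc (N (k - 1) + 1) (N k), (m i : ℝ))
          + (∑ i ∈ Finset.Icc (N k + 1) (N (k + 1)), (m i : ℝ))))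
    (b : ℕ → ℝ)
    (hb : ∀ k, 1 ≤ k → k ≤ q → ∀ i, N (k - 1) < i → i ≤ N k →
      b i = -(∑ j ∈ Finset.Icc (N (k - 1) + 1) (N k), (m j : ℝ) * x j)
              / ((∑ j ∈ Finset.Icc (N (k - 1) + 1) (N k), (m j : ℝ)) * t)
          + ((∑ j ∈ Finset.Icc (i + 1) (N k), (m j : ℝ))
              - (∑ j ∈ Finset.Icc (N (k - 1) + 1) (i - 1), (m j : ℝ))) / 2) :
    (∀ k, 1 ≤ k → k ≤ q → ∀ i, N (k - 1) < i → i + 1 ≤ N k →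
      b i - b (i + 1) = ((m i : ℝ) + (m (i + 1) : ℝ)) / 2) ∧
    (∀ k, 1 ≤ k → k + 1 ≤ q →
      b (N k) - b (N k + 1) > ((m (N k) : ℝ) + (m (N k + 1) : ℝ)) / 2) := by
  constructor
  · intro k hk1 hkq i hi hi1
    obtain ⟨j, rfl⟩ : ∃ j, i = j + 1 := ⟨i - 1, by omega⟩
    rw [hb k hk1 hkq (j + 1) hi (by omega),
      hb k hk1 hkq (j + 1 + 1) (by omega) hi1]
    have e1 : ∑ l ∈ Finset.Icc (j + 1 + 1) (N k), (m l : ℝ)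
        = (m (j + 1 + 1) : ℝ) + ∑ l ∈ Finset.Icc (j + 1 + 1 + 1) (N k), (m l : ℝ) :=
      sum_Icc_bot' (by omega) _
    have e2 : ∑ l ∈ Finset.Icc (N (k - 1) + 1) (j + 1), (m l : ℝ)
        = (∑ l ∈ Finset.Icc (N (k - 1) + 1) j, (m l : ℝ)) + (m (j + 1) : ℝ) :=
      sum_Icc_top' (by omega) _
    simp only [Nat.add_sub_cancel]
    rw [e1, e2]
    ring
  · intro k hk1 hk1q
    have hmono1 : N (k - 1) < N k := by
      have := hNmono (k - 1) (by omega)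
      rwa [Nat.sub_add_cancel hk1] at this
    have hmono2 : N k < N (k + 1) := hNmono k (by omega)
    have hbNk := hb k hk1 (by omega) (N k) hmono1 le_rfl
    have hbNk1 := hb (k + 1) (by omega) hk1q (N k + 1)
      (by simpa using Nat.lt_succ_self (N k)) (by simpa using hmono2)
    simp only [Nat.add_sub_cancel] at hbNk1
    have hempty : Finset.Icc (N k + 1) (N k) = ∅ := by
      apply Finset.Icc_eq_empty; omega
    -- expand the two boundary sums
    obtain ⟨p, hp⟩ : ∃ p, N k = p + 1 := ⟨N k - 1, by omega⟩
    have e1 : ∑ l ∈ Finset.Icc (N (k - 1) + 1) (N k), (m l : ℝ)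
        = (∑ l ∈ Finset.Icc (N (k - 1) + 1) (N k - 1), (m l : ℝ)) + (m (N k) : ℝ) := by
      rw [hp]; simpa using sum_Icc_top' (by omega) _
    have e2 : ∑ l ∈ Finset.Icc (N k + 1) (N (k + 1)), (m l : ℝ)
        = (m (N k + 1) : ℝ) + ∑ l ∈ Finset.Icc (N k + 1 + 1) (N (k + 1)), (m l : ℝ) :=
      sum_Icc_bot' (by omega) _
    set Ak := ∑ l ∈ Finset.Icc (N (k - 1) + 1) (N k), (m l : ℝ) * x l with hAk
    set Ak1 := ∑ l ∈ Finset.Icc (N k + 1) (N (k + 1)), (m l : ℝ) * x l with hAk1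
    set Mk := ∑ l ∈ Finset.Icc (N (k - 1) + 1) (N k), (m l : ℝ) with hMk
    set Mk1 := ∑ l ∈ Finset.Icc (N k + 1) (N (k + 1)), (m l : ℝ) with hMk1
    have hs := hsep k hk1 hk1q
    have hdiv : (Ak1 / Mk1 - Ak / Mk) / t > (Mk + Mk1) / 2 := by
      rw [gt_iff_lt, lt_div_iff₀ ht]
      calc (Mk + Mk1) / 2 * t = t / 2 * (Mk + Mk1) := by ring
        _ < Ak1 / Mk1 - Ak / Mk := hs
    have h1 : (∑ l ∈ Finset.Icc (N (k - 1) + 1) (N k - 1), (m l : ℝ)) = Mk - (m (N k) : ℝ) := by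
      linarith [e1]
    have h2 : (∑ l ∈ Finset.Icc (N k + 1 + 1) (N (k + 1)), (m l : ℝ)) = Mk1 - (m (N k + 1) : ℝ) := by
      linarith [e2]
    have hdd : (Ak1 / Mk1 - Ak / Mk) / t = Ak1 / (Mk1 * t) - Ak / (Mk * t) := by
      rw [sub_div, div_div, div_div]
    have hneg1 : -Ak / (Mk * t) = -(Ak / (Mk * t)) := neg_div _ _
    have hneg2 : -Ak1 / (Mk1 * t) = -(Ak1 / (Mk1 * t)) := neg_div _ _
    rw [hdd] at hdiv
    rw [hbNk, hbNk1, hempty]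
    simp only [Finset.sum_empty]
    rw [h1, h2, hneg1, hneg2]
    linarith
end

section
/- Let B = {p+1, …, r} be a set of consecutive indices in {1, …, n} and define b_i := −(Σ_{j∈B} m_j x_j)/(M_B t) + ( Σ_{j=i+1}^{r} m_j − Σ_{j=p+1}^{i−1} m_j )/2 for i ∈ B. Then Σ_{i∈B} [ (m_i t/2)(b_i + x_i/t)^2 + (m_i^3 − m_i) t/24 − m_i x_i^2/(2t) ] = (M_B^3 − M_B) t/24 − Σ_{k<ℓ, k,ℓ∈B} (m_k m_ℓ/2)(x_ℓ − x_k) − (Σ_{k∈B} m_k x_k)^2/(2 t M_B). -/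
open Finset

lemma aux1 (p : ℕ) (m : ℕ → ℕ) : ∀ r, p ≤ r →
    ∑ i ∈ Icc (p+1) r, (m i : ℝ) * ((∑ j ∈ Icc (i+1) r, (m j : ℝ)) - ∑ j ∈ Icc (p+1) (i-1), (m j : ℝ)) = 0 := by
  intro r hr
  induction r, hr using Nat.le_induction with
  | base => simp [Finset.Icc_eq_empty (by omega : ¬ p + 1 ≤ p)]
  | succ r hr ih =>
    rw [Finset.sum_Icc_succ_top (by omega : p + 1 ≤ r + 1)]
    have h2 : ∀ i ∈ Icc (p+1) r,
        (m i : ℝ) * ((∑ j ∈ Icc (i+1) (r+1), (m j : ℝ)) - ∑ j ∈ Icc (p+1) (i-1), (m j : ℝ))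
        = (m i : ℝ) * ((∑ j ∈ Icc (i+1) r, (m j : ℝ)) - ∑ j ∈ Icc (p+1) (i-1), (m j : ℝ)) + (m i : ℝ) * (m (r+1) : ℝ) := by
      intro i hi
      simp only [Finset.mem_Icc] at hi
      rw [Finset.sum_Icc_succ_top (by omega : i + 1 ≤ r + 1)]
      ring
    rw [Finset.sum_congr rfl h2, Finset.sum_add_distrib, ih, ← Finset.sum_mul]
    have he : Icc (r+1+1) (r+1) = (∅ : Finset ℕ) := Finset.Icc_eq_empty (by omega)
    rw [he, Nat.add_sub_cancel]
    simp
    ring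

lemma aux2 (p : ℕ) (m : ℕ → ℕ) (x : ℕ → ℝ) : ∀ r, p ≤ r →
    ∑ i ∈ Icc (p+1) r, (m i : ℝ) * x i * ((∑ j ∈ Icc (i+1) r, (m j : ℝ)) - ∑ j ∈ Icc (p+1) (i-1), (m j : ℝ))
    = -∑ l ∈ Icc (p+1) r, ∑ k ∈ Icc (p+1) (l-1), (m k : ℝ) * (m l : ℝ) * (x l - x k) := by
  intro r hr
  induction r, hr using Nat.le_induction with
  | base => simp [Finset.Icc_eq_empty (by omega : ¬ p + 1 ≤ p)]
  | succ r hr ih =>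
    rw [Finset.sum_Icc_succ_top (by omega : p + 1 ≤ r + 1)]
    have h2 : ∀ i ∈ Icc (p+1) r,
        (m i : ℝ) * x i * ((∑ j ∈ Icc (i+1) (r+1), (m j : ℝ)) - ∑ j ∈ Icc (p+1) (i-1), (m j : ℝ))
        = (m i : ℝ) * x i * ((∑ j ∈ Icc (i+1) r, (m j : ℝ)) - ∑ j ∈ Icc (p+1) (i-1), (m j : ℝ))
          + (m i : ℝ) * x i * (m (r+1) : ℝ) := by
      intro i hi
      simp only [Finset.mem_Icc] at hi
      rw [Finset.sum_Icc_succ_top (by omega : i + 1 ≤ r + 1)]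
      ring
    rw [Finset.sum_congr rfl h2, Finset.sum_add_distrib, ih, ← Finset.sum_mul]
    have he : Icc (r+1+1) (r+1) = (∅ : Finset ℕ) := Finset.Icc_eq_empty (by omega)
    rw [he, Nat.add_sub_cancel]
    have h3 : ∑ k ∈ Icc (p+1) r, (m k : ℝ) * (m (r+1) : ℝ) * (x (r+1) - x k)
        = (∑ k ∈ Icc (p+1) r, (m k : ℝ)) * ((m (r+1) : ℝ) * x (r+1))
          - (∑ k ∈ Icc (p+1) r, (m k : ℝ) * x k) * (m (r+1) : ℝ) := by
      rw [Finset.sum_mul, Finset.sum_mul]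
      rw [← Finset.sum_sub_distrib]
      exact Finset.sum_congr rfl fun k _ => by ring
    have h4 : ∑ i ∈ Icc (p+1) r, (m i : ℝ) * x i * (m (r+1) : ℝ)
        = (∑ i ∈ Icc (p+1) r, (m i : ℝ) * x i) * (m (r+1) : ℝ) := by
      rw [Finset.sum_mul]
    rw [show (∑ l ∈ Icc (p+1) (r+1), ∑ k ∈ Icc (p+1) (l-1), (m k : ℝ) * (m l : ℝ) * (x l - x k))
        = (∑ l ∈ Icc (p+1) r, ∑ k ∈ Icc (p+1) (l-1), (m k : ℝ) * (m l : ℝ) * (x l - x k))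
          + ∑ k ∈ Icc (p+1) (r+1-1), (m k : ℝ) * (m (r+1) : ℝ) * (x (r+1) - x k) from
      Finset.sum_Icc_succ_top (by omega : p + 1 ≤ r + 1) _]
    rw [Nat.add_sub_cancel, h3]
    simp
    ring

lemma aux3 (p : ℕ) (m : ℕ → ℕ) : ∀ r, p ≤ r →
    3 * ∑ i ∈ Icc (p+1) r, (m i : ℝ) * ((∑ j ∈ Icc (i+1) r, (m j : ℝ)) - ∑ j ∈ Icc (p+1) (i-1), (m j : ℝ))^2
      + ∑ i ∈ Icc (p+1) r, (m i : ℝ)^3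
    = (∑ i ∈ Icc (p+1) r, (m i : ℝ))^3 := by
  intro r hr
  induction r, hr using Nat.le_induction with
  | base => simp [Finset.Icc_eq_empty (by omega : ¬ p + 1 ≤ p)]
  | succ r hr ih =>
    rw [Finset.sum_Icc_succ_top (by omega : p + 1 ≤ r + 1)]
    have h2 : ∀ i ∈ Icc (p+1) r,
        (m i : ℝ) * ((∑ j ∈ Icc (i+1) (r+1), (m j : ℝ)) - ∑ j ∈ Icc (p+1) (i-1), (m j : ℝ))^2
        = (m i : ℝ) * ((∑ j ∈ Icc (i+1) r, (m j : ℝ)) - ∑ j ∈ Icc (p+1) (i-1), (m j : ℝ))^2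
          + 2 * (m (r+1) : ℝ) * ((m i : ℝ) * ((∑ j ∈ Icc (i+1) r, (m j : ℝ)) - ∑ j ∈ Icc (p+1) (i-1), (m j : ℝ)))
          + (m (r+1) : ℝ)^2 * m i := by
      intro i hi
      simp only [Finset.mem_Icc] at hi
      rw [Finset.sum_Icc_succ_top (by omega : i + 1 ≤ r + 1)]
      ring
    rw [Finset.sum_congr rfl h2, Finset.sum_add_distrib, Finset.sum_add_distrib,
        ← Finset.mul_sum, ← Finset.mul_sum, aux1 p m r hr]
    have he : Icc (r+1+1) (r+1) = (∅ : Finset ℕ) := Finset.Icc_eq_empty (by omega)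
    rw [he, Nat.add_sub_cancel]
    rw [show (∑ i ∈ Icc (p+1) (r+1), (m i : ℝ)^3)
        = (∑ i ∈ Icc (p+1) r, (m i : ℝ)^3) + ((m (r+1) : ℝ))^3 from
      Finset.sum_Icc_succ_top (by omega : p + 1 ≤ r + 1) _]
    rw [show (∑ i ∈ Icc (p+1) (r+1), (m i : ℝ))
        = (∑ i ∈ Icc (p+1) r, (m i : ℝ)) + (m (r+1) : ℝ) from
      Finset.sum_Icc_succ_top (by omega : p + 1 ≤ r + 1) _]
    simp only [Finset.sum_empty, zero_sub, zero_add]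
    nlinarith [ih]





/-- blockwise identity between the γ2-target restricted to a block
of consecutive indices and the one-cluster expression γ3 of that block. -/
theorem block_target_eq_cluster
    (n : ℕ) (hn : 1 ≤ n) (t : ℝ) (ht : 0 < t)
    (x : ℕ → ℝ) (hx : ∀ i, 1 ≤ i → i < n → x i < x (i + 1))
    (m : ℕ → ℕ) (hm : ∀ i, 1 ≤ i → i ≤ n → 1 ≤ m i)
    (p r : ℕ) (hpr : p < r) (hrn : r ≤ n)
    (b : ℕ → ℝ)
    (hb : ∀ i, p + 1 ≤ i → i ≤ r →
      b i = -(∑ j ∈ Finset.Icc (p + 1) r, (m j : ℝ) * x j)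
              / ((∑ j ∈ Finset.Icc (p + 1) r, (m j : ℝ)) * t)
          + ((∑ j ∈ Finset.Icc (i + 1) r, (m j : ℝ))
              - (∑ j ∈ Finset.Icc (p + 1) (i - 1), (m j : ℝ))) / 2) :
    ∑ i ∈ Finset.Icc (p + 1) r, ((m i : ℝ) * t / 2 * (b i + x i / t) ^ 2
        + ((m i : ℝ) ^ 3 - (m i : ℝ)) * t / 24 - (m i : ℝ) * x i ^ 2 / (2 * t))
    = ((∑ i ∈ Finset.Icc (p + 1) r, (m i : ℝ)) ^ 3
          - (∑ i ∈ Finset.Icc (p + 1) r, (m i : ℝ))) * t / 24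
      - (∑ l ∈ Finset.Icc (p + 1) r, ∑ k ∈ Finset.Icc (p + 1) (l - 1),
          (m k : ℝ) * (m l : ℝ) / 2 * (x l - x k))
      - (∑ k ∈ Finset.Icc (p + 1) r, (m k : ℝ) * x k) ^ 2
          / (2 * t * (∑ i ∈ Finset.Icc (p + 1) r, (m i : ℝ))) := by
  have ht' : t ≠ 0 := ne_of_gt ht
  have hMpos : 0 < ∑ i ∈ Finset.Icc (p+1) r, (m i : ℝ) := by
    apply Finset.sum_pos
    · intro i hi
      simp only [Finset.mem_Icc] at hi
      have h1 := hm i (by omega) (by omega)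
      exact_mod_cast Nat.lt_of_lt_of_le Nat.zero_lt_one h1
    · exact ⟨p+1, Finset.mem_Icc.mpr ⟨le_rfl, hpr⟩⟩
  set M := ∑ i ∈ Finset.Icc (p+1) r, (m i : ℝ) with hMdef
  set S := ∑ k ∈ Finset.Icc (p+1) r, (m k : ℝ) * x k with hSdef
  have hM' : M ≠ 0 := ne_of_gt hMpos
  have key : ∀ i ∈ Finset.Icc (p+1) r,
      (m i : ℝ) * t / 2 * (b i + x i / t)^2 + ((m i:ℝ)^3 - (m i:ℝ))*t/24
        - (m i:ℝ) * x i^2/(2*t)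
      = t/8 * ((m i : ℝ) * ((∑ j ∈ Finset.Icc (i+1) r, (m j:ℝ))
            - ∑ j ∈ Finset.Icc (p+1) (i-1), (m j:ℝ))^2)
        + t/24 * ((m i:ℝ)^3 - (m i:ℝ))
        + 1/2 * ((m i:ℝ) * x i * ((∑ j ∈ Finset.Icc (i+1) r, (m j:ℝ))
            - ∑ j ∈ Finset.Icc (p+1) (i-1), (m j:ℝ)))
        - S/(2*M) * ((m i:ℝ) * ((∑ j ∈ Finset.Icc (i+1) r, (m j:ℝ))
            - ∑ j ∈ Finset.Icc (p+1) (i-1), (m j:ℝ)))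
        + S^2/(2*M^2*t) * (m i:ℝ)
        - S/(M*t) * ((m i:ℝ) * x i) := by
    intro i hi
    simp only [Finset.mem_Icc] at hi
    rw [hb i hi.1 hi.2]
    field_simp
    ring
  rw [Finset.sum_congr rfl key]
  simp only [Finset.sum_add_distrib, Finset.sum_sub_distrib, ← Finset.mul_sum]
  rw [aux1 p m r hpr.le, aux2 p m x r hpr.le]
  have h3 := aux3 p m r hpr.le
  have hG : (∑ l ∈ Finset.Icc (p+1) r, ∑ k ∈ Finset.Icc (p+1) (l-1),
        (m k : ℝ) * (m l : ℝ) / 2 * (x l - x k))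
      = (∑ l ∈ Finset.Icc (p+1) r, ∑ k ∈ Finset.Icc (p+1) (l-1),
        (m k : ℝ) * (m l : ℝ) * (x l - x k)) / 2 := by
    rw [Finset.sum_div]
    refine Finset.sum_congr rfl fun l _ => ?_
    rw [Finset.sum_div]
    exact Finset.sum_congr rfl fun k _ => by ring
  rw [hG]
  have hD2 : (∑ i ∈ Finset.Icc (p+1) r, (m i : ℝ) * ((∑ j ∈ Finset.Icc (i+1) r, (m j:ℝ))
        - ∑ j ∈ Finset.Icc (p+1) (i-1), (m j:ℝ))^2)
      = (M^3 - ∑ i ∈ Finset.Icc (p+1) r, (m i:ℝ)^3)/3 := by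
    rw [← hMdef] at h3
    linarith
  rw [hD2]
  field_simp
  ring
end

section
/- If a consecutive-block partition of {1, …, n} given by 0 = N_0 < N_1 < ⋯ < N_q = n with blocks B_j satisfies the separation condition, then γ2(t,x,m) ≤ Σ_{j=1}^q [ (M_{B_j}^3 − M_{B_j}) t/24 − Σ_{k<ℓ, k,ℓ∈B_j} (m_k m_ℓ/2)(x_ℓ − x_k) − (Σ_{k∈B_j} m_k x_k)^2/(2 t M_{B_j}) ]. -/
open Finset

private lemma sumIoc_T1 (g : ℕ → ℝ) (a : ℕ) (c : ℕ) :
    ∑ i ∈ Ioc a c, g i * (∑ j ∈ Ioc a i, g j)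
      = ((∑ i ∈ Ioc a c, g i) ^ 2 + ∑ i ∈ Ioc a c, g i ^ 2) / 2 := by
  induction c with
  | zero => simp
  | succ c ih =>
    by_cases h : a ≤ c
    · simp only [Finset.sum_Ioc_succ_top h]
      rw [ih]; ring
    · rw [Finset.Ioc_eq_empty (by omega : ¬ a < c + 1)]
      simp

private lemma sumIoc_T2 (g : ℕ → ℝ) (a : ℕ) (c : ℕ) :
    ∑ i ∈ Ioc a c, g i * (∑ j ∈ Ioc a i, g j) ^ 2
      = (∑ i ∈ Ioc a c, g i) ^ 3 / 3
        + (∑ i ∈ Ioc a c, g i ^ 2 * (∑ j ∈ Ioc a i, g j))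
        - (∑ i ∈ Ioc a c, g i ^ 3) / 3 := by
  induction c with
  | zero => simp
  | succ c ih =>
    by_cases h : a ≤ c
    · simp only [Finset.sum_Ioc_succ_top h]
      rw [ih]; ring
    · rw [Finset.Ioc_eq_empty (by omega : ¬ a < c + 1)]
      simp

private lemma sumIoc_T3 (g h : ℕ → ℝ) (a : ℕ) (c : ℕ) :
    ∑ i ∈ Ioc a c, g i * h i * ((∑ j ∈ Ioc a c, g j) - ∑ j ∈ Ioc a i, g j)
      = ∑ i ∈ Ioc a c, (∑ j ∈ Ioc a (i - 1), g j * h j) * g i := by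
  induction c with
  | zero => simp
  | succ c ih =>
    by_cases hac : a ≤ c
    · simp only [Finset.sum_Ioc_succ_top hac]
      have h1 : ∀ i ∈ Ioc a c, g i * h i * ((∑ j ∈ Ioc a c, g j) + g (c+1) - ∑ j ∈ Ioc a i, g j)
          = g i * h i * ((∑ j ∈ Ioc a c, g j) - ∑ j ∈ Ioc a i, g j) + g i * h i * g (c+1) := by
        intro i _; ring
      rw [Finset.sum_congr rfl h1, Finset.sum_add_distrib, ih, ← Finset.sum_mul]
      simp only [Nat.add_sub_cancel]
      ring
    · rw [Finset.Ioc_eq_empty (by omega : ¬ a < c + 1)]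
      simp

private lemma block_sum (t : ℝ) (ht : 0 < t) (a c : ℕ)
    (g x : ℕ → ℝ) (hM : 0 < ∑ i ∈ Ioc a c, g i) :
    ∑ i ∈ Ioc a c, (g i * t / 2 *
        ((-(∑ j ∈ Ioc a c, g j * x j) / (t * ∑ j ∈ Ioc a c, g j)
          + (((∑ j ∈ Ioc a c, g j) + g i) / 2 - ∑ j ∈ Ioc a i, g j)) + x i / t) ^ 2
      + (g i ^ 3 - g i) * t / 24 - g i * x i ^ 2 / (2 * t))
    = ((∑ i ∈ Ioc a c, g i) ^ 3 - (∑ i ∈ Ioc a c, g i)) * t / 24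
      - (∑ l ∈ Ioc a c, ∑ j ∈ Ioc a (l - 1), g j * g l / 2 * (x l - x j))
      - (∑ i ∈ Ioc a c, g i * x i) ^ 2 / (2 * t * (∑ i ∈ Ioc a c, g i)) := by
  set M := ∑ i ∈ Ioc a c, g i with hMdef
  set X := ∑ i ∈ Ioc a c, g i * x i with hXdef
  set p : ℝ := -X / (t * M) + M / 2 with hp
  have hterm : ∀ i ∈ Ioc a c, (g i * t / 2 *
        ((-X / (t * M) + ((M + g i) / 2 - ∑ j ∈ Ioc a i, g j)) + x i / t) ^ 2
      + (g i ^ 3 - g i) * t / 24 - g i * x i ^ 2 / (2 * t))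
      = ((t/2)*p^2 - t/24) * g i + (t/6) * (g i^3)
        + (t/2) * (g i * (∑ j ∈ Ioc a i, g j)^2) + p * (g i * x i)
        + ((t/2)*p) * (g i^2) - (t*p) * (g i * (∑ j ∈ Ioc a i, g j))
        + (g i^2 * x i)/2 - g i * x i * (∑ j ∈ Ioc a i, g j)
        - (t/2) * (g i ^2 * (∑ j ∈ Ioc a i, g j)) := by
    intro i _
    rw [hp]
    field_simp
    ring
  rw [Finset.sum_congr rfl hterm]
  simp only [Finset.sum_add_distrib, Finset.sum_sub_distrib, ← Finset.mul_sum, ← Finset.sum_div]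
  have hDS : ∑ l ∈ Ioc a c, ∑ j ∈ Ioc a (l - 1), g j * g l / 2 * (x l - x j)
      = (∑ l ∈ Ioc a c, g l * x l * (∑ j ∈ Ioc a l, g j)) / 2
        - (∑ l ∈ Ioc a c, g l ^ 2 * x l) / 2
        - (1/2) * (M * X - ∑ l ∈ Ioc a c, g l * x l * (∑ j ∈ Ioc a l, g j)) := by
    have hinner : ∀ l ∈ Ioc a c, ∑ j ∈ Ioc a (l - 1), g j * g l / 2 * (x l - x j)
        = (g l * x l * (∑ j ∈ Ioc a l, g j)) / 2 - g l ^ 2 * x l / 2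
          - (1/2) * ((∑ j ∈ Ioc a (l - 1), g j * x j) * g l) := by
      intro l hl
      have hl' : a < l := (mem_Ioc.mp hl).1
      have hsplit : ∑ j ∈ Ioc a l, g j = (∑ j ∈ Ioc a (l - 1), g j) + g l := by
        obtain ⟨l', rfl⟩ : ∃ l', l = l' + 1 := ⟨l - 1, by omega⟩
        rw [Finset.sum_Ioc_succ_top (by omega : a ≤ l')]
        simp
      have hj : ∀ j ∈ Ioc a (l - 1), g j * g l / 2 * (x l - x j)
          = (g l * x l / 2) * g j - (1/2) * (g j * x j * g l) := by
        intro j _; ring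
      rw [Finset.sum_congr rfl hj, Finset.sum_sub_distrib, ← Finset.mul_sum, ← Finset.mul_sum,
        ← Finset.sum_mul, hsplit]
      ring
    rw [Finset.sum_congr rfl hinner, Finset.sum_sub_distrib, Finset.sum_sub_distrib,
      ← Finset.sum_div, ← Finset.sum_div, ← Finset.mul_sum, ← sumIoc_T3 g x a c]
    have hexp : ∀ l ∈ Ioc a c, g l * x l * (M - ∑ j ∈ Ioc a l, g j)
        = M * (g l * x l) - g l * x l * (∑ j ∈ Ioc a l, g j) := by
      intro l _; ring
    rw [Finset.sum_congr rfl hexp, Finset.sum_sub_distrib, ← Finset.mul_sum, ← hXdef]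
  rw [hDS, sumIoc_T2 g a c, sumIoc_T1 g a c, ← hMdef, hp]
  field_simp
  ring

/-- γ2 is at most the sum over the blocks of a separated
consecutive-block partition of the one-cluster expressions. -/
theorem gamma2_le_sum_clusters
    (n : ℕ) (hn : 1 ≤ n) (t : ℝ) (ht : 0 < t)
    (x : ℕ → ℝ) (hx : ∀ i, 1 ≤ i → i < n → x i < x (i + 1))
    (m : ℕ → ℕ) (hm : ∀ i, 1 ≤ i → i ≤ n → 1 ≤ m i)
    (q : ℕ) (hq : 1 ≤ q)
    (N : ℕ → ℕ) (hN0 : N 0 = 0) (hNq : N q = n)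
    (hNmono : ∀ k, k < q → N k < N (k + 1))
    (hsep : ∀ k, 1 ≤ k → k + 1 ≤ q →
      (∑ i ∈ Finset.Icc (N k + 1) (N (k + 1)), (m i : ℝ) * x i)
          / (∑ i ∈ Finset.Icc (N k + 1) (N (k + 1)), (m i : ℝ))
        - (∑ i ∈ Finset.Icc (N (k - 1) + 1) (N k), (m i : ℝ) * x i)
          / (∑ i ∈ Finset.Icc (N (k - 1) + 1) (N k), (m i : ℝ))
      > t / 2 * ((∑ i ∈ Finset.Icc (N (k - 1) + 1) (N k), (m i : ℝ))
          + (∑ i ∈ Finset.Icc (N k + 1) (N (k + 1)), (m i : ℝ)))) :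
    sInf {c : ℝ | ∃ b : ℕ → ℝ,
        (∀ i, 1 ≤ i → i + 1 ≤ n → b i - b (i + 1) ≥ ((m i : ℝ) + (m (i + 1) : ℝ)) / 2) ∧
        c = ∑ i ∈ Finset.Icc 1 n, ((m i : ℝ) * t / 2 * (b i + x i / t) ^ 2
            + ((m i : ℝ) ^ 3 - (m i : ℝ)) * t / 24 - (m i : ℝ) * x i ^ 2 / (2 * t))}
    ≤ ∑ k ∈ Finset.Icc 1 q,
        (((∑ i ∈ Finset.Icc (N (k - 1) + 1) (N k), (m i : ℝ)) ^ 3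
            - (∑ i ∈ Finset.Icc (N (k - 1) + 1) (N k), (m i : ℝ))) * t / 24
          - (∑ l ∈ Finset.Icc (N (k - 1) + 1) (N k),
              ∑ j ∈ Finset.Icc (N (k - 1) + 1) (l - 1),
                (m j : ℝ) * (m l : ℝ) / 2 * (x l - x j))
          - (∑ i ∈ Finset.Icc (N (k - 1) + 1) (N k), (m i : ℝ) * x i) ^ 2
              / (2 * t * (∑ i ∈ Finset.Icc (N (k - 1) + 1) (N k), (m i : ℝ)))) := by
  classical
  have hIcc : ∀ a b : ℕ, Finset.Icc (a + 1) b = Finset.Ioc a b := fun a b => Finset.Icc_add_one_left_eq_Ioc a b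
  simp only [hIcc] at hsep ⊢
  have hNle : ∀ j k : ℕ, j ≤ k → k ≤ q → N j ≤ N k := by
    intro j k
    induction k with
    | zero => intro h _; rw [Nat.le_zero.mp h]
    | succ k ih =>
      intro hjk hkq
      rcases Nat.eq_or_lt_of_le hjk with h | h
      · rw [h]
      · exact le_trans (ih (by omega) (by omega)) (le_of_lt (hNmono k (by omega)))
  set b : ℕ → ℝ := fun i => ∑ k ∈ Finset.Icc 1 q,
      (if N (k - 1) < i ∧ i ≤ N k then
        -(∑ j ∈ Finset.Ioc (N (k - 1)) (N k), (m j : ℝ) * x j)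
            / (t * ∑ j ∈ Finset.Ioc (N (k - 1)) (N k), (m j : ℝ))
          + (((∑ j ∈ Finset.Ioc (N (k - 1)) (N k), (m j : ℝ)) + (m i : ℝ)) / 2
            - ∑ j ∈ Finset.Ioc (N (k - 1)) i, (m j : ℝ))
      else 0) with hbdef
  have hbval : ∀ k, 1 ≤ k → k ≤ q → ∀ i, N (k - 1) < i → i ≤ N k →
      b i = -(∑ j ∈ Finset.Ioc (N (k - 1)) (N k), (m j : ℝ) * x j)
            / (t * ∑ j ∈ Finset.Ioc (N (k - 1)) (N k), (m j : ℝ))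
          + (((∑ j ∈ Finset.Ioc (N (k - 1)) (N k), (m j : ℝ)) + (m i : ℝ)) / 2
            - ∑ j ∈ Finset.Ioc (N (k - 1)) i, (m j : ℝ)) := by
    intro k hk1 hkq i hi1 hi2
    have hz : ∀ k' ∈ Finset.Icc 1 q, k' ≠ k →
        (if N (k' - 1) < i ∧ i ≤ N k' then
          -(∑ j ∈ Finset.Ioc (N (k' - 1)) (N k'), (m j : ℝ) * x j)
              / (t * ∑ j ∈ Finset.Ioc (N (k' - 1)) (N k'), (m j : ℝ))
            + (((∑ j ∈ Finset.Ioc (N (k' - 1)) (N k'), (m j : ℝ)) + (m i : ℝ)) / 2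
              - ∑ j ∈ Finset.Ioc (N (k' - 1)) i, (m j : ℝ))
        else 0) = 0 := by
      intro k' hk' hne
      rw [Finset.mem_Icc] at hk'
      apply if_neg
      rintro ⟨ha, hb2⟩
      rcases Nat.lt_or_ge k' k with h | h
      · have : N k' ≤ N (k - 1) := hNle k' (k - 1) (by omega) (by omega)
        omega
      · have : N k ≤ N (k' - 1) := hNle k (k' - 1) (by omega) (by omega)
        omega
    rw [hbdef]
    simp only []
    rw [Finset.sum_eq_single_of_mem k (Finset.mem_Icc.mpr ⟨hk1, hkq⟩) hz,
      if_pos (show N (k - 1) < i ∧ i ≤ N k from ⟨hi1, hi2⟩)]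
  have hMpos : ∀ k, 1 ≤ k → k ≤ q → 0 < ∑ j ∈ Finset.Ioc (N (k - 1)) (N k), (m j : ℝ) := by
    intro k hk1 hkq
    have hlt : N (k - 1) < N k := by
      have := hNmono (k - 1) (by omega)
      rwa [show k - 1 + 1 = k by omega] at this
    apply Finset.sum_pos'
    · intro i _; exact Nat.cast_nonneg _
    · refine ⟨N k, Finset.mem_Ioc.mpr ⟨hlt, le_refl _⟩, ?_⟩
      have h1 : 1 ≤ N k := by omega
      have h2 : N k ≤ n := by rw [← hNq]; exact hNle k q hkq le_rfl
      exact_mod_cast hm (N k) h1 h2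
  -- separation for β
  have hsep' : ∀ k, 1 ≤ k → k + 1 ≤ q →
      -(∑ j ∈ Finset.Ioc (N (k - 1)) (N k), (m j : ℝ) * x j)
          / (t * ∑ j ∈ Finset.Ioc (N (k - 1)) (N k), (m j : ℝ))
        - (-(∑ j ∈ Finset.Ioc (N k) (N (k + 1)), (m j : ℝ) * x j)
          / (t * ∑ j ∈ Finset.Ioc (N k) (N (k + 1)), (m j : ℝ)))
      > ((∑ j ∈ Finset.Ioc (N (k - 1)) (N k), (m j : ℝ))
          + (∑ j ∈ Finset.Ioc (N k) (N (k + 1)), (m j : ℝ))) / 2 := by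
    intro k hk1 hkq
    have h := hsep k hk1 hkq
    have hM1 : 0 < ∑ j ∈ Finset.Ioc (N (k - 1)) (N k), (m j : ℝ) := hMpos k hk1 (by omega)
    have hM2 : 0 < ∑ j ∈ Finset.Ioc (N k) (N (k + 1)), (m j : ℝ) := by
      have := hMpos (k + 1) (by omega) hkq
      rwa [show k + 1 - 1 = k by omega] at this
    set A := ∑ j ∈ Finset.Ioc (N (k - 1)) (N k), (m j : ℝ) * x j
    set B := ∑ j ∈ Finset.Ioc (N (k - 1)) (N k), (m j : ℝ)
    set C := ∑ j ∈ Finset.Ioc (N k) (N (k + 1)), (m j : ℝ) * x j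
    set D := ∑ j ∈ Finset.Ioc (N k) (N (k + 1)), (m j : ℝ)
    have heq : -A / (t * B) - (-C / (t * D)) = (C / D - A / B) / t := by
      field_simp
      ring
    rw [heq, gt_iff_lt, lt_div_iff₀ ht]
    nlinarith [h]
  -- the constraint
  have hconstraint : ∀ i, 1 ≤ i → i + 1 ≤ n →
      b i - b (i + 1) ≥ ((m i : ℝ) + (m (i + 1) : ℝ)) / 2 := by
    intro i hi1 hi2
    have hex : ∃ k, i ≤ N k := ⟨q, by rw [hNq]; omega⟩
    set k := Nat.find hex with hkdef
    have hik : i ≤ N k := Nat.find_spec hex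
    have hmin : ∀ j, j < k → ¬ i ≤ N j := fun j hj => Nat.find_min hex hj
    have hk1 : 1 ≤ k := by
      rcases Nat.eq_zero_or_pos k with h | h
      · exfalso; have := hik; rw [h, hN0] at this; omega
      · exact h
    have hkq : k ≤ q := by
      by_contra h
      exact hmin q (by omega) (by rw [hNq]; omega)
    have hNk1 : N (k - 1) < i := by
      have := hmin (k - 1) (by omega)
      omega
    by_cases hsame : i + 1 ≤ N k
    · rw [hbval k hk1 hkq i hNk1 hik, hbval k hk1 hkq (i + 1) (by omega) hsame,
        Finset.sum_Ioc_succ_top (by omega : N (k - 1) ≤ i)]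
      apply ge_of_eq
      ring
    · have hiNk : i = N k := by omega
      have hk1q : k + 1 ≤ q := by
        by_contra h
        have hkq' : k = q := by omega
        rw [hiNk, hkq', hNq] at hi2
        omega
      have hnext1 : N ((k + 1) - 1) < i + 1 := by
        rw [show k + 1 - 1 = k by omega]; omega
      have hnext2 : i + 1 ≤ N (k + 1) := by
        have := hNmono k (by omega); omega
      rw [hbval k hk1 hkq i hNk1 hik, hbval (k + 1) (by omega) hk1q (i + 1) hnext1 hnext2]
      rw [show k + 1 - 1 = k by omega, hiNk]
      have hsing : ∑ j ∈ Finset.Ioc (N k) (N k + 1), (m j : ℝ) = (m (N k + 1) : ℝ) := by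
        rw [Finset.sum_Ioc_succ_top (le_refl (N k))]
        simp
      rw [hsing]
      have h := hsep' k hk1 hk1q
      have hfull : ∑ j ∈ Finset.Ioc (N (k - 1)) (N k), (m j : ℝ)
          = ∑ j ∈ Finset.Ioc (N (k - 1)) (N k), (m j : ℝ) := rfl
      rw [ge_iff_le]
      linarith [h]
    -- done constraint
  -- decomposition of sums over blocks
  have hdecomp : ∀ f : ℕ → ℝ, ∀ r, r ≤ q → ∑ i ∈ Finset.Ioc (N 0) (N r), f i
      = ∑ k ∈ Finset.Icc 1 r, ∑ i ∈ Finset.Ioc (N (k - 1)) (N k), f i := by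
    intro f r
    induction r with
    | zero => intro _; simp
    | succ r ih =>
      intro hrq
      rw [← Finset.sum_Ioc_consecutive f (hNle 0 r (by omega) (by omega))
          (le_of_lt (hNmono r (by omega))),
        ih (by omega), Finset.sum_Icc_succ_top (by omega : 1 ≤ r + 1)]
      simp only [Nat.add_sub_cancel]
  apply csInf_le
  · refine ⟨∑ i ∈ Finset.Icc 1 n, (((m i : ℝ) ^ 3 - (m i : ℝ)) * t / 24
      - (m i : ℝ) * x i ^ 2 / (2 * t)), ?_⟩
    rintro c ⟨b', hb', rfl⟩
    apply Finset.sum_le_sum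
    intro i _
    have h0 : 0 ≤ (m i : ℝ) * t / 2 * (b' i + x i / t) ^ 2 := by positivity
    linarith
  · refine ⟨b, hconstraint, ?_⟩
    have hdec := hdecomp (fun i => ((m i : ℝ) * t / 2 * (b i + x i / t) ^ 2
        + ((m i : ℝ) ^ 3 - (m i : ℝ)) * t / 24 - (m i : ℝ) * x i ^ 2 / (2 * t))) q le_rfl
    rw [hN0, hNq] at hdec
    simp only [hIcc] at hdec
    rw [hdec]
    apply Finset.sum_congr rfl
    intro k hk
    rw [Finset.mem_Ioc] at hk
    have hbs := block_sum t ht (N (k - 1)) (N k) (fun j => (m j : ℝ)) x (hMpos k hk.1 hk.2)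
    rw [← hbs]
    apply Finset.sum_congr rfl
    intro i hi
    rw [Finset.mem_Ioc] at hi
    rw [hbval k hk.1 hk.2 i hi.1 hi.2]
end

section
/- For every m ∈ ℤ_{≥1}, t > 0 and x ∈ ℝ, the vector â ∈ ℝ^m with â_i := −x/t + (m+1)/2 − i is the unique minimizer of a ↦ Σ_{i=1}^m (t/2) a_i^2 + x Σ_{i=1}^m a_i over the set { a ∈ ℝ^m : a_i − a_{i+1} ≥ 1 for i = 1, …, m−1 }. -/
lemma sum_Icc_cast_aux (m : ℕ) : ∑ i ∈ Finset.Icc 1 m, (i : ℝ) = m * (m + 1) / 2 := by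
  induction m with
  | zero => simp
  | succ n ih =>
    rw [Finset.sum_Icc_succ_top (Nat.le_add_left 1 n), ih]
    push_cast; ring

/-- `â_i = -x/t + (m+1)/2 - i` is the unique minimizer of the
one-point variational problem. -/
theorem one_point_unique_minimizer
    (m : ℕ) (hm : 1 ≤ m) (t : ℝ) (ht : 0 < t) (x : ℝ)
    (ahat : ℕ → ℝ) (hahat : ∀ i, ahat i = -x / t + ((m : ℝ) + 1) / 2 - (i : ℝ)) :
    (∀ i, 1 ≤ i → i + 1 ≤ m → ahat i - ahat (i + 1) ≥ 1) ∧
    (∀ a : ℕ → ℝ, (∀ i, 1 ≤ i → i + 1 ≤ m → a i - a (i + 1) ≥ 1) →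
      ((∑ i ∈ Finset.Icc 1 m, t / 2 * ahat i ^ 2) + x * ∑ i ∈ Finset.Icc 1 m, ahat i
          ≤ (∑ i ∈ Finset.Icc 1 m, t / 2 * a i ^ 2) + x * ∑ i ∈ Finset.Icc 1 m, a i) ∧
      ((∑ i ∈ Finset.Icc 1 m, t / 2 * a i ^ 2) + x * ∑ i ∈ Finset.Icc 1 m, a i
          = (∑ i ∈ Finset.Icc 1 m, t / 2 * ahat i ^ 2) + x * ∑ i ∈ Finset.Icc 1 m, ahat i →
        ∀ i ∈ Finset.Icc 1 m, a i = ahat i)) := by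
  have hgap : ∀ i : ℕ, ahat i - ahat (i + 1) = 1 := by
    intro i; rw [hahat i, hahat (i + 1)]; push_cast; ring
  refine ⟨fun i _ _ => by rw [hgap i], ?_⟩
  intro a ha
  set s := Finset.Icc 1 m with hs
  set d : ℕ → ℝ := fun i => a i - ahat i with hdd
  set c : ℕ → ℝ := fun i => ((m : ℝ) + 1) / 2 - (i : ℝ) with hcc
  -- d is antitone on s
  have hdstep : ∀ i, 1 ≤ i → i + 1 ≤ m → d (i + 1) ≤ d i := by
    intro i h1 h2
    have h := ha i h1 h2
    have h' := hgap i
    simp only [hdd]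
    linarith
  have hanti : ∀ i j, 1 ≤ i → i ≤ j → j ≤ m → d j ≤ d i := by
    intro i j h1 hij hjm
    induction j, hij using Nat.le_induction with
    | base => exact le_refl _
    | succ n hn ih =>
      have hnm : n ≤ m := le_trans (Nat.le_succ n) hjm
      have h1n : 1 ≤ n := le_trans h1 hn
      exact le_trans (hdstep n h1n hjm) (ih hnm)
  -- Chebyshev : ∑ c * d ≥ 0
  have hmono : MonovaryOn c d (s : Set ℕ) := by
    intro i hi j hj hlt
    simp only [hs, Finset.coe_Icc, Set.mem_Icc] at hi hj
    have hji : j < i := by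
      by_contra hle
      push_neg at hle
      exact absurd (hanti i j hi.1 hle hj.2) (not_le.mpr hlt)
    simp only [hcc]
    have : (j : ℝ) ≤ (i : ℝ) := by exact_mod_cast hji.le
    linarith
  have hsc : ∑ i ∈ s, c i = 0 := by
    simp only [hcc, hs, Finset.sum_sub_distrib, sum_Icc_cast_aux, Finset.sum_const,
      Nat.card_Icc, nsmul_eq_mul]
    push_cast
    ring
  have hcd : 0 ≤ ∑ i ∈ s, c i * d i := by
    have h := hmono.sum_mul_sum_le_card_mul_sum
    rw [hsc, zero_mul] at h
    have hcard : (0 : ℝ) < (s.card : ℝ) := by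
      have : 0 < s.card := by
        rw [hs, Nat.card_Icc]; omega
      exact_mod_cast this
    nlinarith [h, hcard]
  -- key identity
  have hterm : ∀ i ∈ s, t / 2 * a i ^ 2 + x * a i - (t / 2 * ahat i ^ 2 + x * ahat i)
      = t / 2 * d i ^ 2 + t * (c i * d i) := by
    intro i _
    simp only [hdd, hcc]
    rw [hahat i]
    field_simp
    ring
  have hkey : (∑ i ∈ s, t / 2 * a i ^ 2) + x * ∑ i ∈ s, a i
      - ((∑ i ∈ s, t / 2 * ahat i ^ 2) + x * ∑ i ∈ s, ahat i)
      = (∑ i ∈ s, t / 2 * d i ^ 2) + t * ∑ i ∈ s, c i * d i := by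
    rw [Finset.mul_sum, Finset.mul_sum, Finset.mul_sum]
    rw [← Finset.sum_add_distrib, ← Finset.sum_add_distrib, ← Finset.sum_add_distrib,
      ← Finset.sum_sub_distrib]
    exact Finset.sum_congr rfl hterm
  have hsq : 0 ≤ ∑ i ∈ s, t / 2 * d i ^ 2 :=
    Finset.sum_nonneg fun i _ => by positivity
  constructor
  · nlinarith [hkey, hsq, hcd, ht]
  · intro heq i hi
    have h0 : (∑ i ∈ s, t / 2 * d i ^ 2) + t * ∑ i ∈ s, c i * d i = 0 := by
      rw [← hkey]; rw [hs] at *; linarith [heq]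
    have hsq0 : ∑ i ∈ s, t / 2 * d i ^ 2 = 0 := by
      nlinarith [hsq, hcd, ht]
    have hall : ∀ j ∈ s, t / 2 * d j ^ 2 = 0 := by
      intro j hj
      have := (Finset.sum_eq_zero_iff_of_nonneg (fun j _ => by positivity)).mp hsq0 j hj
      exact this
    have := hall i hi
    have hd0 : d i = 0 := by
      have hsq2 : d i ^ 2 = 0 := by
        by_contra h
        have hpos : 0 < d i ^ 2 := lt_of_le_of_ne (sq_nonneg _) (Ne.symm h)
        have := mul_pos (by linarith : (0:ℝ) < t / 2) hpos
        linarith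
      exact pow_eq_zero_iff (n := 2) (by norm_num) |>.mp hsq2
    simp only [hdd] at hd0
    linarith
end

section
/- Let n = 2, t > 0, x_1 < x_2 real, m_1, m_2 ∈ ℤ_{≥1}. If 0 < (x_2 − x_1)/t ≤ (m_1 + m_2)/2, then γ2(t,(x_1,x_2),(m_1,m_2)) = ((m_1+m_2)^3 − (m_1+m_2)) t/24 − m_1 m_2 (x_2 − x_1)/2 − (m_1 x_1 + m_2 x_2)^2/(2 (m_1+m_2) t). -/
set_option maxHeartbeats 1600000 in
/-- two-point value of γ2 in the merged regime
`0 < (x2 - x1)/t ≤ (m1 + m2)/2`. -/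
theorem gamma2_two_point_merged
    (t : ℝ) (ht : 0 < t) (x₁ x₂ : ℝ) (hx : x₁ < x₂)
    (m₁ m₂ : ℕ) (hm₁ : 1 ≤ m₁) (hm₂ : 1 ≤ m₂)
    (hregime : (x₂ - x₁) / t ≤ ((m₁ : ℝ) + (m₂ : ℝ)) / 2) :
    sInf {c : ℝ | ∃ b₁ b₂ : ℝ, b₁ - b₂ ≥ ((m₁ : ℝ) + (m₂ : ℝ)) / 2 ∧
        c = ((m₁ : ℝ) * t / 2 * (b₁ + x₁ / t) ^ 2
              + ((m₁ : ℝ) ^ 3 - (m₁ : ℝ)) * t / 24 - (m₁ : ℝ) * x₁ ^ 2 / (2 * t))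
          + ((m₂ : ℝ) * t / 2 * (b₂ + x₂ / t) ^ 2
              + ((m₂ : ℝ) ^ 3 - (m₂ : ℝ)) * t / 24 - (m₂ : ℝ) * x₂ ^ 2 / (2 * t))}
    = (((m₁ : ℝ) + (m₂ : ℝ)) ^ 3 - ((m₁ : ℝ) + (m₂ : ℝ))) * t / 24
        - (m₁ : ℝ) * (m₂ : ℝ) * (x₂ - x₁) / 2
        - ((m₁ : ℝ) * x₁ + (m₂ : ℝ) * x₂) ^ 2 / (2 * ((m₁ : ℝ) + (m₂ : ℝ)) * t) := by
  have h1 : (1:ℝ) ≤ (m₁:ℝ) := by exact_mod_cast hm₁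
  have h2 : (1:ℝ) ≤ (m₂:ℝ) := by exact_mod_cast hm₂
  have hM : (0:ℝ) < (m₁:ℝ) + (m₂:ℝ) := by linarith
  have ht' : t ≠ 0 := ne_of_gt ht
  have hM' : ((m₁:ℝ) + (m₂:ℝ)) ≠ 0 := ne_of_gt hM
  set δ : ℝ := ((m₁:ℝ) + (m₂:ℝ))/2 - (x₂ - x₁)/t with hδdef
  have hδ : 0 ≤ δ := by rw [hδdef]; linarith
  clear_value δ
  -- lower bound: every element of the set is at least the RHS
  have hlb : ∀ c ∈ {c : ℝ | ∃ b₁ b₂ : ℝ, b₁ - b₂ ≥ ((m₁ : ℝ) + (m₂ : ℝ)) / 2 ∧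
        c = ((m₁ : ℝ) * t / 2 * (b₁ + x₁ / t) ^ 2
              + ((m₁ : ℝ) ^ 3 - (m₁ : ℝ)) * t / 24 - (m₁ : ℝ) * x₁ ^ 2 / (2 * t))
          + ((m₂ : ℝ) * t / 2 * (b₂ + x₂ / t) ^ 2
              + ((m₂ : ℝ) ^ 3 - (m₂ : ℝ)) * t / 24 - (m₂ : ℝ) * x₂ ^ 2 / (2 * t))},
      (((m₁ : ℝ) + (m₂ : ℝ)) ^ 3 - ((m₁ : ℝ) + (m₂ : ℝ))) * t / 24
        - (m₁ : ℝ) * (m₂ : ℝ) * (x₂ - x₁) / 2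
        - ((m₁ : ℝ) * x₁ + (m₂ : ℝ) * x₂) ^ 2 / (2 * ((m₁ : ℝ) + (m₂ : ℝ)) * t) ≤ c := by
    rintro c ⟨b₁, b₂, hb, rfl⟩
    set a₁ : ℝ := b₁ + x₁ / t with ha₁
    set a₂ : ℝ := b₂ + x₂ / t with ha₂
    have ha : δ ≤ a₁ - a₂ := by
      rw [ha₁, ha₂, hδdef]
      have : b₁ + x₁ / t - (b₂ + x₂ / t) = b₁ - b₂ - (x₂ - x₁)/t := by ring
      rw [this]; linarith
    clear_value a₁ a₂
    have hsq : δ^2 ≤ (a₁ - a₂)^2 := by nlinarith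
    have key : (m₁:ℝ) * (m₂:ℝ) * δ^2 ≤ ((m₁:ℝ) + (m₂:ℝ)) * ((m₁:ℝ) * a₁^2 + (m₂:ℝ) * a₂^2) := by
      nlinarith [sq_nonneg ((m₁:ℝ) * a₁ + (m₂:ℝ) * a₂), mul_le_mul_of_nonneg_left hsq
        (by positivity : (0:ℝ) ≤ (m₁:ℝ) * (m₂:ℝ))]
    -- rewrite RHS using δ
    have hval : (((m₁ : ℝ) + (m₂ : ℝ)) ^ 3 - ((m₁ : ℝ) + (m₂ : ℝ))) * t / 24
        - (m₁ : ℝ) * (m₂ : ℝ) * (x₂ - x₁) / 2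
        - ((m₁ : ℝ) * x₁ + (m₂ : ℝ) * x₂) ^ 2 / (2 * ((m₁ : ℝ) + (m₂ : ℝ)) * t)
        = t * ((m₁:ℝ) * (m₂:ℝ) * δ^2) / (2 * ((m₁:ℝ) + (m₂:ℝ)))
          + (((m₁:ℝ)^3 - (m₁:ℝ)) * t / 24 + ((m₂:ℝ)^3 - (m₂:ℝ)) * t / 24)
          - ((m₁:ℝ) * x₁^2 / (2*t) + (m₂:ℝ) * x₂^2 / (2*t)) := by
      rw [hδdef]; field_simp; ring
    rw [hval]
    have h3 : t * ((m₁:ℝ) * (m₂:ℝ) * δ^2)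
        ≤ t * (((m₁:ℝ) + (m₂:ℝ)) * ((m₁:ℝ) * a₁^2 + (m₂:ℝ) * a₂^2)) :=
      mul_le_mul_of_nonneg_left key (le_of_lt ht)
    have hmul : t * ((m₁:ℝ) * (m₂:ℝ) * δ^2) / (2 * ((m₁:ℝ) + (m₂:ℝ)))
        ≤ (m₁:ℝ) * t / 2 * a₁^2 + (m₂:ℝ) * t / 2 * a₂^2 := by
      rw [div_le_iff₀ (by linarith)]
      nlinarith [h3]
    linarith [hmul]
  have hbdd : BddBelow {c : ℝ | ∃ b₁ b₂ : ℝ, b₁ - b₂ ≥ ((m₁ : ℝ) + (m₂ : ℝ)) / 2 ∧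
        c = ((m₁ : ℝ) * t / 2 * (b₁ + x₁ / t) ^ 2
              + ((m₁ : ℝ) ^ 3 - (m₁ : ℝ)) * t / 24 - (m₁ : ℝ) * x₁ ^ 2 / (2 * t))
          + ((m₂ : ℝ) * t / 2 * (b₂ + x₂ / t) ^ 2
              + ((m₂ : ℝ) ^ 3 - (m₂ : ℝ)) * t / 24 - (m₂ : ℝ) * x₂ ^ 2 / (2 * t))} :=
    ⟨_, fun c hc => hlb c hc⟩
  have hmem : (((m₁ : ℝ) + (m₂ : ℝ)) ^ 3 - ((m₁ : ℝ) + (m₂ : ℝ))) * t / 24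
        - (m₁ : ℝ) * (m₂ : ℝ) * (x₂ - x₁) / 2
        - ((m₁ : ℝ) * x₁ + (m₂ : ℝ) * x₂) ^ 2 / (2 * ((m₁ : ℝ) + (m₂ : ℝ)) * t)
      ∈ {c : ℝ | ∃ b₁ b₂ : ℝ, b₁ - b₂ ≥ ((m₁ : ℝ) + (m₂ : ℝ)) / 2 ∧
        c = ((m₁ : ℝ) * t / 2 * (b₁ + x₁ / t) ^ 2
              + ((m₁ : ℝ) ^ 3 - (m₁ : ℝ)) * t / 24 - (m₁ : ℝ) * x₁ ^ 2 / (2 * t))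
          + ((m₂ : ℝ) * t / 2 * (b₂ + x₂ / t) ^ 2
              + ((m₂ : ℝ) ^ 3 - (m₂ : ℝ)) * t / 24 - (m₂ : ℝ) * x₂ ^ 2 / (2 * t))} := by
    refine ⟨(m₂:ℝ) * δ / ((m₁:ℝ) + (m₂:ℝ)) - x₁ / t,
      -((m₁:ℝ) * δ / ((m₁:ℝ) + (m₂:ℝ))) - x₂ / t, ?_, ?_⟩
    · have h5 : (m₂:ℝ) * δ / ((m₁:ℝ) + (m₂:ℝ)) - x₁ / t
          - (-((m₁:ℝ) * δ / ((m₁:ℝ) + (m₂:ℝ))) - x₂ / t)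
          = δ + (x₂ - x₁)/t := by field_simp; ring
      rw [ge_iff_le, h5, hδdef]; linarith
    · rw [hδdef]; field_simp; ring
  exact le_antisymm (csInf_le hbdd hmem)
    (le_csInf ⟨_, hmem⟩ fun c hc => hlb c hc)
end

section
/- Let t > 0, x_1 < x_2 real, m_1, m_2 ∈ ℤ_{≥1} with 0 < (x_2 − x_1)/t ≤ (m_1 + m_2)/2. Then the pair (b_1, b_2) with b_1 := −(m_1 x_1 + m_2 x_2)/((m_1+m_2) t) + m_2/2 and b_2 := b_1 − (m_1+m_2)/2 attains the infimum defining γ2(t,(x_1,x_2),(m_1,m_2)). -/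
/-- in the merged regime, the pair
`b₁ = -(m₁x₁+m₂x₂)/((m₁+m₂)t) + m₂/2`, `b₂ = b₁ - (m₁+m₂)/2`
attains the infimum defining two-point γ2. -/
theorem gamma2_two_point_merged_minimizer
    (t : ℝ) (ht : 0 < t) (x₁ x₂ : ℝ) (hx : x₁ < x₂)
    (m₁ m₂ : ℕ) (hm₁ : 1 ≤ m₁) (hm₂ : 1 ≤ m₂)
    (hregime : (x₂ - x₁) / t ≤ ((m₁ : ℝ) + (m₂ : ℝ)) / 2)
    (b₁ b₂ : ℝ)
    (hb₁ : b₁ = -((m₁ : ℝ) * x₁ + (m₂ : ℝ) * x₂) / (((m₁ : ℝ) + (m₂ : ℝ)) * t) + (m₂ : ℝ) / 2)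
    (hb₂ : b₂ = b₁ - ((m₁ : ℝ) + (m₂ : ℝ)) / 2) :
    b₁ - b₂ ≥ ((m₁ : ℝ) + (m₂ : ℝ)) / 2 ∧
    ((m₁ : ℝ) * t / 2 * (b₁ + x₁ / t) ^ 2
        + ((m₁ : ℝ) ^ 3 - (m₁ : ℝ)) * t / 24 - (m₁ : ℝ) * x₁ ^ 2 / (2 * t))
      + ((m₂ : ℝ) * t / 2 * (b₂ + x₂ / t) ^ 2
        + ((m₂ : ℝ) ^ 3 - (m₂ : ℝ)) * t / 24 - (m₂ : ℝ) * x₂ ^ 2 / (2 * t))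
    = sInf {c : ℝ | ∃ c₁ c₂ : ℝ, c₁ - c₂ ≥ ((m₁ : ℝ) + (m₂ : ℝ)) / 2 ∧
        c = ((m₁ : ℝ) * t / 2 * (c₁ + x₁ / t) ^ 2
              + ((m₁ : ℝ) ^ 3 - (m₁ : ℝ)) * t / 24 - (m₁ : ℝ) * x₁ ^ 2 / (2 * t))
          + ((m₂ : ℝ) * t / 2 * (c₂ + x₂ / t) ^ 2
              + ((m₂ : ℝ) ^ 3 - (m₂ : ℝ)) * t / 24 - (m₂ : ℝ) * x₂ ^ 2 / (2 * t))} := by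
  have hm₁' : (0:ℝ) < (m₁:ℝ) := by exact_mod_cast hm₁
  have hm₂' : (0:ℝ) < (m₂:ℝ) := by exact_mod_cast hm₂
  have hM : (0:ℝ) < (m₁:ℝ) + (m₂:ℝ) := by linarith
  set q : ℝ := (((m₁:ℝ) + (m₂:ℝ))/2 - (x₂ - x₁)/t) / ((m₁:ℝ) + (m₂:ℝ)) with hq
  have hq0 : 0 ≤ q := by
    apply div_nonneg _ hM.le
    linarith
  have h1 : b₁ + x₁ / t = (m₂:ℝ) * q := by
    rw [hb₁, hq]; field_simp; ring
  have h2 : b₂ + x₂ / t = -((m₁:ℝ) * q) := by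
    rw [hb₂, hb₁, hq]; field_simp; ring
  have hge : b₁ - b₂ ≥ ((m₁ : ℝ) + (m₂ : ℝ)) / 2 := by rw [hb₂]; ring_nf; exact le_refl _
  refine ⟨hge, ?_⟩
  have hlb : ∀ c ∈ {c : ℝ | ∃ c₁ c₂ : ℝ, c₁ - c₂ ≥ ((m₁ : ℝ) + (m₂ : ℝ)) / 2 ∧
        c = ((m₁ : ℝ) * t / 2 * (c₁ + x₁ / t) ^ 2
              + ((m₁ : ℝ) ^ 3 - (m₁ : ℝ)) * t / 24 - (m₁ : ℝ) * x₁ ^ 2 / (2 * t))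
          + ((m₂ : ℝ) * t / 2 * (c₂ + x₂ / t) ^ 2
              + ((m₂ : ℝ) ^ 3 - (m₂ : ℝ)) * t / 24 - (m₂ : ℝ) * x₂ ^ 2 / (2 * t))},
      ((m₁ : ℝ) * t / 2 * (b₁ + x₁ / t) ^ 2
        + ((m₁ : ℝ) ^ 3 - (m₁ : ℝ)) * t / 24 - (m₁ : ℝ) * x₁ ^ 2 / (2 * t))
      + ((m₂ : ℝ) * t / 2 * (b₂ + x₂ / t) ^ 2
        + ((m₂ : ℝ) ^ 3 - (m₂ : ℝ)) * t / 24 - (m₂ : ℝ) * x₂ ^ 2 / (2 * t)) ≤ c := by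
    rintro c ⟨c₁, c₂, hc12, rfl⟩
    have e1 : c₁ + x₁ / t = (c₁ - b₁) + (m₂:ℝ) * q := by linarith
    have e2 : c₂ + x₂ / t = (c₂ - b₂) - (m₁:ℝ) * q := by linarith
    have huv : c₁ - b₁ - (c₂ - b₂) ≥ 0 := by rw [hb₂]; linarith
    rw [e1, e2, h1, h2]
    nlinarith [mul_nonneg (mul_nonneg (mul_nonneg (mul_nonneg ht.le hq0) hm₁'.le) hm₂'.le) huv,
      mul_nonneg (mul_nonneg ht.le hm₁'.le) (sq_nonneg (c₁ - b₁)),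
      mul_nonneg (mul_nonneg ht.le hm₂'.le) (sq_nonneg (c₂ - b₂))]
  have hmem : ((m₁ : ℝ) * t / 2 * (b₁ + x₁ / t) ^ 2
        + ((m₁ : ℝ) ^ 3 - (m₁ : ℝ)) * t / 24 - (m₁ : ℝ) * x₁ ^ 2 / (2 * t))
      + ((m₂ : ℝ) * t / 2 * (b₂ + x₂ / t) ^ 2
        + ((m₂ : ℝ) ^ 3 - (m₂ : ℝ)) * t / 24 - (m₂ : ℝ) * x₂ ^ 2 / (2 * t)) ∈
      {c : ℝ | ∃ c₁ c₂ : ℝ, c₁ - c₂ ≥ ((m₁ : ℝ) + (m₂ : ℝ)) / 2 ∧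
        c = ((m₁ : ℝ) * t / 2 * (c₁ + x₁ / t) ^ 2
              + ((m₁ : ℝ) ^ 3 - (m₁ : ℝ)) * t / 24 - (m₁ : ℝ) * x₁ ^ 2 / (2 * t))
          + ((m₂ : ℝ) * t / 2 * (c₂ + x₂ / t) ^ 2
              + ((m₂ : ℝ) ^ 3 - (m₂ : ℝ)) * t / 24 - (m₂ : ℝ) * x₂ ^ 2 / (2 * t))} :=
    ⟨b₁, b₂, hge, rfl⟩
  exact le_antisymm (le_csInf ⟨_, hmem⟩ hlb) (csInf_le ⟨_, hlb⟩ hmem)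
end

section
/- Suppose b̂ ∈ ℝ^n attains the infimum defining γ2(t,x,m) and that γ1(t,x,m) = γ2(t,x,m). Then the vector â ∈ ℝ^M defined by â_k := b̂_j + (m_j + 1)/2 − k + S_{j−1} whenever S_{j−1} < k ≤ S_j attains the infimum defining γ1(t,x,m). -/
open Finset

private lemma aux_sum_range_id (m : ℕ) :
    ∑ i ∈ Finset.range m, (i : ℝ) = (m : ℝ) * ((m : ℝ) - 1) / 2 := by
  induction m with
  | zero => simp
  | succ k ih => rw [Finset.sum_range_succ, ih]; push_cast; ring

private lemma aux_sum_range_sq (m : ℕ) :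
    ∑ i ∈ Finset.range m, (i : ℝ) ^ 2 = (m : ℝ) * ((m : ℝ) - 1) * (2 * (m : ℝ) - 1) / 6 := by
  induction m with
  | zero => simp
  | succ k ih => rw [Finset.sum_range_succ, ih]; push_cast; ring

private lemma aux_block_sum (t p b : ℝ) (ht : t ≠ 0) (m : ℕ) :
    ∑ i ∈ Finset.range m, (t / 2 * (b + ((m : ℝ) - 1) / 2 - (i : ℝ)) ^ 2
        + p * (b + ((m : ℝ) - 1) / 2 - (i : ℝ)))
    = (m : ℝ) * t / 2 * (b + p / t) ^ 2 + ((m : ℝ) ^ 3 - (m : ℝ)) * t / 24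
        - (m : ℝ) * p ^ 2 / (2 * t) := by
  set c : ℝ := b + ((m : ℝ) - 1) / 2 with hc
  have h1 : ∀ i ∈ Finset.range m, t / 2 * (c - (i : ℝ)) ^ 2 + p * (c - (i : ℝ))
      = (t / 2 * c ^ 2 + p * c) - (t * c + p) * (i : ℝ) + t / 2 * (i : ℝ) ^ 2 := by
    intro i _; ring
  rw [Finset.sum_congr rfl h1, Finset.sum_add_distrib, Finset.sum_sub_distrib,
    Finset.sum_const, ← Finset.mul_sum, ← Finset.mul_sum, aux_sum_range_id,
    aux_sum_range_sq, Finset.card_range, nsmul_eq_mul, hc]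
  field_simp
  ring

private lemma aux_exists_block (S : ℕ → ℕ) :
    ∀ N k, S 0 < k → k ≤ S N → ∃ j, 1 ≤ j ∧ j ≤ N ∧ S (j - 1) < k ∧ k ≤ S j := by
  intro N
  induction N with
  | zero => intro k h1 h2; omega
  | succ N ih =>
    intro k h1 h2
    by_cases h : k ≤ S N
    · obtain ⟨j, hj1, hj2, hj3, hj4⟩ := ih k h1 h
      exact ⟨j, hj1, hj2.trans (Nat.le_succ N), hj3, hj4⟩
    · exact ⟨N + 1, by omega, le_refl _, by simpa using h, h2⟩

private lemma aux_decomp (S : ℕ → ℕ) (h0 : S 0 = 0) (hmono : Monotone S) (f : ℕ → ℝ) :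
    ∀ N, ∑ k ∈ Finset.Ioc 0 (S N), f k
      = ∑ j ∈ Finset.Icc 1 N, ∑ k ∈ Finset.Ioc (S (j - 1)) (S j), f k := by
  intro N
  induction N with
  | zero => simp [h0]
  | succ N ih =>
    rw [Finset.sum_Icc_succ_top (by omega : 1 ≤ N + 1)]
    simp only [Nat.add_sub_cancel]
    rw [← ih, Finset.sum_Ioc_consecutive f (Nat.zero_le (S N)) (hmono (Nat.le_succ N))]

/-- if `b̂` attains the infimum defining γ2 and γ1 = γ2, then the
vector `â` built from `b̂` attains the infimum defining γ1. -/
theorem a_from_minimizer_attains_gamma1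
    (n : ℕ) (hn : 1 ≤ n) (t : ℝ) (ht : 0 < t)
    (x : ℕ → ℝ) (hx : ∀ i, 1 ≤ i → i < n → x i < x (i + 1))
    (m : ℕ → ℕ) (hm : ∀ i, 1 ≤ i → i ≤ n → 1 ≤ m i)
    (M : ℕ) (hM : M = ∑ i ∈ Finset.Icc 1 n, m i)
    (u : ℕ → ℝ)
    (hu : ∀ j, 1 ≤ j → j ≤ n → ∀ k, (∑ i ∈ Finset.Icc 1 (j - 1), m i) < k →
      k ≤ ∑ i ∈ Finset.Icc 1 j, m i → u k = x j)
    (bhat : ℕ → ℝ)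
    (hbfeas : ∀ i, 1 ≤ i → i + 1 ≤ n →
      bhat i - bhat (i + 1) ≥ ((m i : ℝ) + (m (i + 1) : ℝ)) / 2)
    (hbmin : ∑ i ∈ Finset.Icc 1 n, ((m i : ℝ) * t / 2 * (bhat i + x i / t) ^ 2
        + ((m i : ℝ) ^ 3 - (m i : ℝ)) * t / 24 - (m i : ℝ) * x i ^ 2 / (2 * t))
      = sInf {c : ℝ | ∃ b : ℕ → ℝ,
          (∀ i, 1 ≤ i → i + 1 ≤ n → b i - b (i + 1) ≥ ((m i : ℝ) + (m (i + 1) : ℝ)) / 2) ∧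
          c = ∑ i ∈ Finset.Icc 1 n, ((m i : ℝ) * t / 2 * (b i + x i / t) ^ 2
              + ((m i : ℝ) ^ 3 - (m i : ℝ)) * t / 24 - (m i : ℝ) * x i ^ 2 / (2 * t))})
    (hgamma : sInf {c : ℝ | ∃ a : ℕ → ℝ,
        (∀ i, 1 ≤ i → i + 1 ≤ M → a i - a (i + 1) ≥ 1) ∧
        c = ∑ i ∈ Finset.Icc 1 M, (t / 2 * a i ^ 2 + u i * a i)}
      = sInf {c : ℝ | ∃ b : ℕ → ℝ,
          (∀ i, 1 ≤ i → i + 1 ≤ n → b i - b (i + 1) ≥ ((m i : ℝ) + (m (i + 1) : ℝ)) / 2) ∧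
          c = ∑ i ∈ Finset.Icc 1 n, ((m i : ℝ) * t / 2 * (b i + x i / t) ^ 2
              + ((m i : ℝ) ^ 3 - (m i : ℝ)) * t / 24 - (m i : ℝ) * x i ^ 2 / (2 * t))})
    (ahat : ℕ → ℝ)
    (hahat : ∀ j, 1 ≤ j → j ≤ n → ∀ k, (∑ i ∈ Finset.Icc 1 (j - 1), m i) < k →
      k ≤ ∑ i ∈ Finset.Icc 1 j, m i →
      ahat k = bhat j + ((m j : ℝ) + 1) / 2 - (k : ℝ)
        + ((∑ i ∈ Finset.Icc 1 (j - 1), m i : ℕ) : ℝ)) :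
    (∀ i, 1 ≤ i → i + 1 ≤ M → ahat i - ahat (i + 1) ≥ 1) ∧
    ∑ i ∈ Finset.Icc 1 M, (t / 2 * ahat i ^ 2 + u i * ahat i)
      = sInf {c : ℝ | ∃ a : ℕ → ℝ,
          (∀ i, 1 ≤ i → i + 1 ≤ M → a i - a (i + 1) ≥ 1) ∧
          c = ∑ i ∈ Finset.Icc 1 M, (t / 2 * a i ^ 2 + u i * a i)} := by
  have hSstep : ∀ j, 1 ≤ j → (∑ i ∈ Finset.Icc 1 j, m i)
      = (∑ i ∈ Finset.Icc 1 (j - 1), m i) + m j := by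
    intro j hj
    obtain ⟨j', rfl⟩ : ∃ j', j = j' + 1 := ⟨j - 1, by omega⟩
    simp only [Nat.add_sub_cancel]
    exact Finset.sum_Icc_succ_top (by omega) m
  have hmono : Monotone (fun j => ∑ i ∈ Finset.Icc 1 j, m i) := by
    intro a b hab
    exact Finset.sum_le_sum_of_subset (Finset.Icc_subset_Icc_right hab)
  -- feasibility of ahat
  have hfeas : ∀ i, 1 ≤ i → i + 1 ≤ M → ahat i - ahat (i + 1) ≥ 1 := by
    intro i hi1 hiM
    have hblk := aux_exists_block (fun j => ∑ i ∈ Finset.Icc 1 j, m i) n i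
      (by simp; omega) (by omega)
    obtain ⟨j, hj1, hjn, hji1, hji2⟩ := hblk
    rcases lt_or_eq_of_le hji2 with hlt | heq
    · -- i and i+1 in the same block j
      have e1 := hahat j hj1 hjn i hji1 hji2
      have e2 := hahat j hj1 hjn (i + 1) (by omega) (by omega)
      rw [e1, e2]
      push_cast
      linarith
    · -- i = S j, i+1 lies in block j+1
      have hjlt : j + 1 ≤ n := by
        rcases Nat.lt_or_ge j n with h | h
        · omega
        · exfalso
          have hjeq : j = n := by omega
          subst hjeq
          omega
      have hm1 : 1 ≤ m (j + 1) := hm (j + 1) (by omega) hjlt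
      have hSj1 : (∑ i ∈ Finset.Icc 1 (j + 1), m i)
          = (∑ i ∈ Finset.Icc 1 j, m i) + m (j + 1) := by
        have := hSstep (j + 1) (by omega)
        simpa using this
      have e1 := hahat j hj1 hjn i hji1 hji2
      have e2 := hahat (j + 1) (by omega) hjlt (i + 1)
        (by simp only [Nat.add_sub_cancel]; omega) (by omega)
      simp only [Nat.add_sub_cancel] at e2
      have hb := hbfeas j hj1 hjlt
      have c1 : (i : ℝ) = ((∑ i ∈ Finset.Icc 1 (j - 1), m i : ℕ) : ℝ) + (m j : ℝ) := by
        rw [heq, hSstep j hj1]; push_cast; ring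
      have c3 : (i : ℝ) = ((∑ i ∈ Finset.Icc 1 j, m i : ℕ) : ℝ) := by
        exact_mod_cast congrArg (Nat.cast (R := ℝ)) heq
      rw [e1, e2]
      push_cast
      push_cast at c1 c3
      linarith
  refine ⟨hfeas, ?_⟩
  -- the objective value of ahat equals the gamma2 objective value of bhat
  have hIcc : Finset.Icc 1 M = Finset.Ioc 0 M := by
    exact Finset.Icc_add_one_left_eq_Ioc 0 M
  have hkey : ∑ i ∈ Finset.Icc 1 M, (t / 2 * ahat i ^ 2 + u i * ahat i)
      = ∑ j ∈ Finset.Icc 1 n, ((m j : ℝ) * t / 2 * (bhat j + x j / t) ^ 2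
          + ((m j : ℝ) ^ 3 - (m j : ℝ)) * t / 24 - (m j : ℝ) * x j ^ 2 / (2 * t)) := by
    have hdec := aux_decomp (fun j => ∑ i ∈ Finset.Icc 1 j, m i) (by simp) hmono
      (fun k => t / 2 * ahat k ^ 2 + u k * ahat k) n
    rw [hIcc, hM, hdec]
    refine Finset.sum_congr rfl ?_
    intro j hj
    obtain ⟨hj1, hjn⟩ := Finset.mem_Icc.mp hj
    have hSj : (∑ i ∈ Finset.Icc 1 j, m i)
        = (∑ i ∈ Finset.Icc 1 (j - 1), m i) + m j := hSstep j hj1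
    have hcong : ∀ k ∈ Finset.Ioc (∑ i ∈ Finset.Icc 1 (j - 1), m i)
        (∑ i ∈ Finset.Icc 1 j, m i),
        (t / 2 * ahat k ^ 2 + u k * ahat k)
        = t / 2 * (bhat j + ((m j : ℝ) + 1) / 2 - (k : ℝ)
            + ((∑ i ∈ Finset.Icc 1 (j - 1), m i : ℕ) : ℝ)) ^ 2
          + x j * (bhat j + ((m j : ℝ) + 1) / 2 - (k : ℝ)
            + ((∑ i ∈ Finset.Icc 1 (j - 1), m i : ℕ) : ℝ)) := by
      intro k hk
      obtain ⟨hk1, hk2⟩ := Finset.mem_Ioc.mp hk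
      rw [hu j hj1 hjn k hk1 hk2, hahat j hj1 hjn k hk1 hk2]
    rw [Finset.sum_congr rfl hcong, hSj,
      show Finset.Ioc (∑ i ∈ Finset.Icc 1 (j - 1), m i)
            ((∑ i ∈ Finset.Icc 1 (j - 1), m i) + m j)
          = Finset.Ico ((∑ i ∈ Finset.Icc 1 (j - 1), m i) + 1)
            ((∑ i ∈ Finset.Icc 1 (j - 1), m i) + m j + 1) by
        rw [← Finset.Icc_add_one_left_eq_Ioc, Finset.Ico_add_one_right_eq_Icc],
      Finset.sum_Ico_eq_sum_range,
      show (∑ i ∈ Finset.Icc 1 (j - 1), m i) + m j + 1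
          - ((∑ i ∈ Finset.Icc 1 (j - 1), m i) + 1) = m j by omega]
    rw [← aux_block_sum t (x j) (bhat j) (ne_of_gt ht) (m j)]
    refine Finset.sum_congr rfl ?_
    intro i _
    push_cast
    ring_nf
  rw [hkey, hbmin, ← hgamma]
end

section
/- Let n ≥ 2, t > 0, x_1 < ⋯ < x_n real and m_1, …, m_n ∈ ℤ_{≥1}, with M := Σ_{j=1}^n m_j. Set φ_j := (Σ_{i=j+1}^n m_i − Σ_{i=1}^{j−1} m_i)/2, v := (Σ_{j=1}^n m_j x_j)/(M t), and s_0 := min_{1 ≤ j ≤ n−1} (x_{j+1} − x_j)/((m_j + m_{j+1})/2); assume the minimum is attained at a unique index k and that 0 < s_0 < t. Define ξ_j := x_j + (φ_j − v) s_0 (so that ξ_k = ξ_{k+1}), and form the merged data of length n−1: x' := (ξ_1, …, ξ_{k−1}, ξ_k, ξ_{k+2}, …, ξ_n) and m' := (m_1, …, m_{k−1}, m_k + m_{k+1}, m_{k+2}, …, m_n). Then Σ_{j=1}^n [ (m_j^3 − m_j) s_0/24 − m_j (x_j − ξ_j)^2/(2 s_0) ] + Γ(t − s_0, x', m') = Γ(t,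 x, m). -/
private lemma icc_one (p : ℕ) : Finset.Icc 1 p = Finset.Ioc 0 p := by
  ext a; simp only [Finset.mem_Icc, Finset.mem_Ioc]; omega

private lemma icc_succ (j p : ℕ) : Finset.Icc (j + 1) p = Finset.Ioc j p := by
  ext a; simp only [Finset.mem_Icc, Finset.mem_Ioc]; omega

private lemma tele (g : ℕ → ℝ) (n : ℕ) :
    ∑ j ∈ Finset.Ioc 0 n, (g (j - 1) - g j) = g 0 - g n := by
  induction n with
  | zero => simp
  | succ n ih =>
      rw [Finset.sum_Ioc_succ_top (Nat.zero_le _)]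
      simp only [Nat.add_sub_cancel]
      rw [ih]; ring

private lemma swap_sum (F : ℕ → ℕ → ℝ) (n : ℕ) :
    ∑ l ∈ Finset.Ioc 0 n, ∑ j ∈ Finset.Ioc 0 (l - 1), F j l
      = ∑ j ∈ Finset.Ioc 0 n, ∑ l ∈ Finset.Ioc j n, F j l := by
  induction n with
  | zero => simp
  | succ n ih =>
      rw [Finset.sum_Ioc_succ_top (Nat.zero_le _), ih,
        Finset.sum_Ioc_succ_top (Nat.zero_le _)]
      simp only [Nat.add_sub_cancel, Finset.Ioc_self, Finset.sum_empty, add_zero]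
      rw [← Finset.sum_add_distrib]
      refine Finset.sum_congr rfl fun j hj => ?_
      rw [Finset.sum_Ioc_succ_top (Finset.mem_Ioc.mp hj).2]

private lemma merge_sum (n k : ℕ) (hk1 : 1 ≤ k) (hk2 : k + 1 ≤ n)
    (g g' : ℕ → ℝ)
    (hlo : ∀ l, 1 ≤ l → l < k → g' l = g l)
    (hmid : g' k = g k + g (k + 1))
    (hhi : ∀ l, k < l → l ≤ n - 1 → g' l = g (l + 1)) :
    ∑ l ∈ Finset.Ioc 0 (n - 1), g' l = ∑ l ∈ Finset.Ioc 0 n, g l := by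
  obtain ⟨p, rfl⟩ : ∃ p, n = p + 1 := ⟨n - 1, by omega⟩
  obtain ⟨q, rfl⟩ : ∃ q, k = q + 1 := ⟨k - 1, by omega⟩
  simp only [Nat.add_sub_cancel] at hhi ⊢
  have hqp : q + 1 ≤ p := by omega
  rw [← Finset.sum_Ioc_consecutive g' (Nat.zero_le (q + 1)) hqp,
      ← Finset.sum_Ioc_consecutive g (Nat.zero_le (q + 1 + 1)) (by omega : q + 1 + 1 ≤ p + 1)]
  congr 1
  · rw [Finset.sum_Ioc_succ_top (Nat.zero_le q),
      Finset.sum_Ioc_succ_top (Nat.zero_le (q + 1)),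
      Finset.sum_Ioc_succ_top (Nat.zero_le q), hmid]
    have heq : ∑ l ∈ Finset.Ioc 0 q, g' l = ∑ l ∈ Finset.Ioc 0 q, g l :=
      Finset.sum_congr rfl fun l hl => by
        have h := Finset.mem_Ioc.mp hl
        exact hlo l (by omega) (by omega)
    rw [heq]; ring
  · have hmap : Finset.Ioc (q + 1 + 1) (p + 1)
        = (Finset.Ioc (q + 1) p).map (addRightEmbedding 1) := by
      rw [Finset.map_add_right_Ioc]
    rw [hmap, Finset.sum_map]
    refine Finset.sum_congr rfl fun l hl => ?_
    have h := Finset.mem_Ioc.mp hl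
    simp only [addRightEmbedding_apply]
    exact hhi l h.1 h.2

private lemma linear_id (c : ℕ → ℝ) (n : ℕ) (T : ℕ → ℝ)
    (hT : ∀ j, T j = ∑ i ∈ Finset.Ioc 0 j, c i) :
    ∑ j ∈ Finset.Ioc 0 n, c j * ((T n - T j - T (j - 1)) / 2) = 0 := by
  have hstep : ∀ j : ℕ, 1 ≤ j → T j = T (j - 1) + c j := by
    intro j hj
    obtain ⟨i, rfl⟩ : ∃ i, j = i + 1 := ⟨j - 1, by omega⟩
    simp only [Nat.add_sub_cancel, hT]
    exact Finset.sum_Ioc_succ_top (Nat.zero_le i) _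
  have htel : ∑ j ∈ Finset.Ioc 0 n,
      ((T n - 2 * T (j - 1)) ^ 2 - (T n - 2 * T j) ^ 2)
      = (T n - 2 * T 0) ^ 2 - (T n - 2 * T n) ^ 2 :=
    tele (fun j => (T n - 2 * T j) ^ 2) n
  have hT0 : T 0 = 0 := by simp [hT]
  have h2 : ∑ j ∈ Finset.Ioc 0 n,
      ((T n - 2 * T (j - 1)) ^ 2 - (T n - 2 * T j) ^ 2)
      = ∑ j ∈ Finset.Ioc 0 n, 8 * (c j * ((T n - T j - T (j - 1)) / 2)) := by
    refine Finset.sum_congr rfl fun j hj => ?_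
    have h1 : 1 ≤ j := (Finset.mem_Ioc.mp hj).1
    rw [hstep j h1]; ring
  rw [h2, ← Finset.mul_sum, hT0] at htel
  nlinarith [htel]

private lemma cubic_id (c : ℕ → ℝ) (n : ℕ) (T : ℕ → ℝ)
    (hT : ∀ j, T j = ∑ i ∈ Finset.Ioc 0 j, c i) :
    12 * ∑ j ∈ Finset.Ioc 0 n, c j * ((T n - T j - T (j - 1)) / 2) ^ 2
      = (T n) ^ 3 - ∑ j ∈ Finset.Ioc 0 n, (c j) ^ 3 := by
  have hstep : ∀ j : ℕ, 1 ≤ j → T j = T (j - 1) + c j := by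
    intro j hj
    obtain ⟨i, rfl⟩ : ∃ i, j = i + 1 := ⟨j - 1, by omega⟩
    simp only [Nat.add_sub_cancel, hT]
    exact Finset.sum_Ioc_succ_top (Nat.zero_le i) _
  have htel : ∑ j ∈ Finset.Ioc 0 n,
      ((T n - 2 * T (j - 1)) ^ 3 - (T n - 2 * T j) ^ 3)
      = (T n - 2 * T 0) ^ 3 - (T n - 2 * T n) ^ 3 :=
    tele (fun j => (T n - 2 * T j) ^ 3) n
  have hT0 : T 0 = 0 := by simp [hT]
  have h2 : ∑ j ∈ Finset.Ioc 0 n,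
      ((T n - 2 * T (j - 1)) ^ 3 - (T n - 2 * T j) ^ 3)
      = ∑ j ∈ Finset.Ioc 0 n,
        (24 * (c j * ((T n - T j - T (j - 1)) / 2) ^ 2) + 2 * (c j) ^ 3) := by
    refine Finset.sum_congr rfl fun j hj => ?_
    have h1 : 1 ≤ j := (Finset.mem_Ioc.mp hj).1
    rw [hstep j h1]; ring
  rw [h2, Finset.sum_add_distrib, ← Finset.mul_sum, ← Finset.mul_sum, hT0] at htel
  nlinarith [htel]

private lemma pair_sum (c y : ℕ → ℝ) (n : ℕ) (T : ℕ → ℝ)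
    (hT : ∀ j, T j = ∑ i ∈ Finset.Ioc 0 j, c i) :
    ∑ l ∈ Finset.Ioc 0 n, ∑ j ∈ Finset.Ioc 0 (l - 1), c j * c l / 2 * (y l - y j)
      = - ∑ l ∈ Finset.Ioc 0 n, c l * ((T n - T l - T (l - 1)) / 2) * y l := by
  have expand : ∀ l ∈ Finset.Ioc 0 n,
      ∑ j ∈ Finset.Ioc 0 (l - 1), c j * c l / 2 * (y l - y j)
        = c l * y l / 2 * T (l - 1)
          - ∑ j ∈ Finset.Ioc 0 (l - 1), c l / 2 * (c j * y j) := by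
    intro l _
    rw [show ∑ j ∈ Finset.Ioc 0 (l - 1), c j * c l / 2 * (y l - y j)
        = ∑ j ∈ Finset.Ioc 0 (l - 1),
            (c l * y l / 2 * c j - c l / 2 * (c j * y j)) from
      Finset.sum_congr rfl fun j _ => by ring]
    rw [Finset.sum_sub_distrib, ← Finset.mul_sum, ← hT]
  rw [Finset.sum_congr rfl expand, Finset.sum_sub_distrib,
    swap_sum (fun j l => c l / 2 * (c j * y j)) n]
  have inner : ∀ j ∈ Finset.Ioc 0 n,
      ∑ l ∈ Finset.Ioc j n, c l / 2 * (c j * y j)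
        = (T n - T j) / 2 * (c j * y j) := by
    intro j hj
    have hjn : j ≤ n := (Finset.mem_Ioc.mp hj).2
    rw [← Finset.sum_mul, ← Finset.sum_div]
    congr 2
    have h := Finset.sum_Ioc_consecutive c (Nat.zero_le j) hjn
    rw [← hT, ← hT] at h
    linarith
  rw [Finset.sum_congr rfl inner, ← Finset.sum_sub_distrib, ← Finset.sum_neg_distrib]
  exact Finset.sum_congr rfl fun l _ => by ring


/-- The one-cluster expression
`Γ(s, y, w) = (W³ − W)s/24 − Σ_{j<l} (w_j w_l/2)(y_l − y_j) − (Σ w_j y_j)²/(2 s W)`,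
where the data has length `p` (indices `1, …, p`) and `W = Σ_{j=1}^p w_j`. -/
noncomputable def oneClusterGamma (s : ℝ) (p : ℕ) (y : ℕ → ℝ) (w : ℕ → ℕ) : ℝ :=
  ((∑ j ∈ Finset.Icc 1 p, (w j : ℝ)) ^ 3 - ∑ j ∈ Finset.Icc 1 p, (w j : ℝ)) * s / 24
    - ∑ l ∈ Finset.Icc 1 p, ∑ j ∈ Finset.Icc 1 (l - 1), (w j : ℝ) * (w l : ℝ) / 2 * (y l - y j)
    - (∑ j ∈ Finset.Icc 1 p, (w j : ℝ) * y j) ^ 2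
        / (2 * s * ∑ j ∈ Finset.Icc 1 p, (w j : ℝ))

/-- the merging identity for the one-cluster expression. -/
theorem merging_identity
    (n : ℕ) (hn : 2 ≤ n) (t : ℝ) (ht : 0 < t)
    (x : ℕ → ℝ) (hx : ∀ i, 1 ≤ i → i < n → x i < x (i + 1))
    (m : ℕ → ℕ) (hm : ∀ i, 1 ≤ i → i ≤ n → 1 ≤ m i)
    (φ : ℕ → ℝ)
    (hφ : ∀ j, φ j = ((∑ i ∈ Finset.Icc (j + 1) n, (m i : ℝ))
        - ∑ i ∈ Finset.Icc 1 (j - 1), (m i : ℝ)) / 2)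
    (v : ℝ)
    (hv : v = (∑ j ∈ Finset.Icc 1 n, (m j : ℝ) * x j)
        / ((∑ j ∈ Finset.Icc 1 n, (m j : ℝ)) * t))
    (k : ℕ) (hk1 : 1 ≤ k) (hk2 : k + 1 ≤ n)
    (s₀ : ℝ) (hs₀ : s₀ = (x (k + 1) - x k) / (((m k : ℝ) + (m (k + 1) : ℝ)) / 2))
    (hmin : ∀ j, 1 ≤ j → j + 1 ≤ n → j ≠ k →
      (x (j + 1) - x j) / (((m j : ℝ) + (m (j + 1) : ℝ)) / 2) > s₀)
    (hs₀pos : 0 < s₀) (hs₀t : s₀ < t)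
    (ξ : ℕ → ℝ) (hξ : ∀ j, ξ j = x j + (φ j - v) * s₀)
    (x' : ℕ → ℝ)
    (hx'lo : ∀ i, 1 ≤ i → i ≤ k → x' i = ξ i)
    (hx'hi : ∀ i, k < i → i ≤ n - 1 → x' i = ξ (i + 1))
    (m' : ℕ → ℕ)
    (hm'lo : ∀ i, 1 ≤ i → i < k → m' i = m i)
    (hm'k : m' k = m k + m (k + 1))
    (hm'hi : ∀ i, k < i → i ≤ n - 1 → m' i = m (i + 1)) :
    (∑ j ∈ Finset.Icc 1 n, (((m j : ℝ) ^ 3 - (m j : ℝ)) * s₀ / 24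
        - (m j : ℝ) * (x j - ξ j) ^ 2 / (2 * s₀)))
      + oneClusterGamma (t - s₀) (n - 1) x' m'
    = oneClusterGamma t n x m := by

  classical
  set T : ℕ → ℝ := fun j => ∑ i ∈ Finset.Ioc 0 j, (m i : ℝ) with hTdef
  set T' : ℕ → ℝ := fun j => ∑ i ∈ Finset.Ioc 0 j, (m' i : ℝ) with hT'def
  have hT : ∀ j, T j = ∑ i ∈ Finset.Ioc 0 j, (m i : ℝ) := fun j => by rw [hTdef]
  have hT' : ∀ j, T' j = ∑ i ∈ Finset.Ioc 0 j, (m' i : ℝ) := fun j => by rw [hT'def]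
  have hstep : ∀ j : ℕ, 1 ≤ j → T j = T (j - 1) + (m j : ℝ) := by
    intro j hj
    obtain ⟨i, rfl⟩ : ∃ i, j = i + 1 := ⟨j - 1, by omega⟩
    simp only [Nat.add_sub_cancel, hT]
    exact Finset.sum_Ioc_succ_top (Nat.zero_le i) _
  have hstep' : ∀ j : ℕ, 1 ≤ j → T' j = T' (j - 1) + (m' j : ℝ) := by
    intro j hj
    obtain ⟨i, rfl⟩ : ∃ i, j = i + 1 := ⟨j - 1, by omega⟩
    simp only [Nat.add_sub_cancel, hT']
    exact Finset.sum_Ioc_succ_top (Nat.zero_le i) _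
  -- φ in terms of T
  have hφT : ∀ j, 1 ≤ j → j ≤ n → φ j = (T n - T j - T (j - 1)) / 2 := by
    intro j h1 h2
    rw [hφ j, icc_succ, icc_one, ← hT]
    have h := Finset.sum_Ioc_consecutive (fun i => (m i : ℝ)) (Nat.zero_le j) h2
    rw [← hT, ← hT] at h
    have : ∑ i ∈ Finset.Ioc j n, (m i : ℝ) = T n - T j := by linarith
    rw [this]
  -- T' in terms of T
  have hT'lt : ∀ l, l < k → T' l = T l := by
    intro l hl
    rw [hT, hT']
    refine Finset.sum_congr rfl fun i hi => ?_
    have h := Finset.mem_Ioc.mp hi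
    rw [hm'lo i (by omega) (by omega)]
  have hT'k : T' k = T (k + 1) := by
    have e1 := hstep' k hk1
    have e2 := hstep (k + 1) (by omega)
    have e3 := hstep k hk1
    simp only [Nat.add_sub_cancel] at e2
    rw [hT'lt (k - 1) (by omega)] at e1
    rw [e1, e2, e3, hm'k]
    push_cast
    ring
  have hT'ge : ∀ l, k ≤ l → l ≤ n - 1 → T' l = T (l + 1) := by
    intro l hkl hln
    have h1 := Finset.sum_Ioc_consecutive (fun i => (m' i : ℝ)) (Nat.zero_le k) hkl
    rw [← hT', ← hT'] at h1
    have h2 : ∑ i ∈ Finset.Ioc k l, (m' i : ℝ) = ∑ i ∈ Finset.Ioc (k + 1) (l + 1), (m i : ℝ) := by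
      rw [show Finset.Ioc (k + 1) (l + 1) = (Finset.Ioc k l).map (addRightEmbedding 1) from
        (Finset.map_add_right_Ioc k l 1).symm, Finset.sum_map]
      refine Finset.sum_congr rfl fun i hi => ?_
      have h := Finset.mem_Ioc.mp hi
      simp only [addRightEmbedding_apply]
      rw [hm'hi i h.1 (le_trans h.2 hln)]
    have h3 := Finset.sum_Ioc_consecutive (fun i => (m i : ℝ)) (Nat.zero_le (k + 1))
      (by omega : k + 1 ≤ l + 1)
    rw [← hT, ← hT] at h3
    rw [h2] at h1
    rw [← h1, hT'k]
    linarith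
  have hWT' : T' (n - 1) = T n := by
    have h := hT'ge (n - 1) (by omega) le_rfl
    rwa [show n - 1 + 1 = n by omega] at h
  -- basic positivity
  have hSWpos : 0 < ∑ j ∈ Finset.Ioc 0 n, (m j : ℝ) := by
    refine Finset.sum_pos (fun i hi => ?_) ⟨1, by simp; omega⟩
    have h := Finset.mem_Ioc.mp hi
    have := hm i (by omega) h.2
    exact_mod_cast Nat.lt_of_lt_of_le Nat.zero_lt_one this
  have hSWne : (∑ j ∈ Finset.Ioc 0 n, (m j : ℝ)) ≠ 0 := ne_of_gt hSWpos
  have htne : t ≠ 0 := ne_of_gt ht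
  have hs₀ne : s₀ ≠ 0 := ne_of_gt hs₀pos
  have htsne : t - s₀ ≠ 0 := by intro h; linarith [sub_eq_zero.mp h]
  have hTnW : T n = ∑ j ∈ Finset.Ioc 0 n, (m j : ℝ) := hT n
  -- ξ at the merge point
  have hξk : ξ (k + 1) = ξ k := by
    have hmk : (1 : ℝ) ≤ (m k : ℝ) := by exact_mod_cast hm k hk1 (by omega)
    have hmk1 : (1 : ℝ) ≤ (m (k + 1) : ℝ) := by exact_mod_cast hm (k + 1) (by omega) hk2
    have hden : ((m k : ℝ) + (m (k + 1) : ℝ)) / 2 ≠ 0 := by positivity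
    have hxx : x (k + 1) - x k = s₀ * (((m k : ℝ) + (m (k + 1) : ℝ)) / 2) := by
      rw [hs₀, div_mul_cancel₀ _ hden]
    have e1 := hstep (k + 1) (by omega)
    have e2 := hstep k hk1
    simp only [Nat.add_sub_cancel] at e1
    have hφk : φ (k + 1) - φ k = -(((m k : ℝ) + (m (k + 1) : ℝ)) / 2) := by
      rw [hφT (k + 1) (by omega) hk2, hφT k hk1 (by omega)]
      simp only [Nat.add_sub_cancel]
      rw [e1, e2]
      ring
    rw [hξ (k + 1), hξ k]
    have : x (k + 1) + (φ (k + 1) - v) * s₀ - (x k + (φ k - v) * s₀)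
        = x (k + 1) - x k + (φ (k + 1) - φ k) * s₀ := by ring
    nlinarith [hφk, hxx]
  -- linear and quadratic φ-moments
  have hlin : ∑ j ∈ Finset.Ioc 0 n, (m j : ℝ) * φ j = 0 := by
    have h := linear_id (fun i => (m i : ℝ)) n T hT
    rw [← h]
    refine Finset.sum_congr rfl fun j hj => ?_
    have hb := Finset.mem_Ioc.mp hj
    rw [hφT j (by omega) hb.2]
  have hcub : 12 * ∑ j ∈ Finset.Ioc 0 n, (m j : ℝ) * φ j ^ 2
      = (∑ j ∈ Finset.Ioc 0 n, (m j : ℝ)) ^ 3 - ∑ j ∈ Finset.Ioc 0 n, (m j : ℝ) ^ 3 := by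
    have h := cubic_id (fun i => (m i : ℝ)) n T hT
    rw [hTnW] at h
    rw [← h]
    congr 1
    refine Finset.sum_congr rfl fun j hj => ?_
    have hb := Finset.mem_Ioc.mp hj
    rw [hφT j (by omega) hb.2]
  -- first sum in closed form
  have hfirst : (∑ j ∈ Finset.Ioc 0 n, (((m j : ℝ) ^ 3 - (m j : ℝ)) * s₀ / 24
        - (m j : ℝ) * (x j - ξ j) ^ 2 / (2 * s₀)))
      = ((∑ j ∈ Finset.Ioc 0 n, (m j : ℝ)) ^ 3
          - 12 * (∑ j ∈ Finset.Ioc 0 n, (m j : ℝ) * φ j ^ 2)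
          - (∑ j ∈ Finset.Ioc 0 n, (m j : ℝ))) * s₀ / 24
        - s₀ / 2 * ((∑ j ∈ Finset.Ioc 0 n, (m j : ℝ) * φ j ^ 2)
          + v ^ 2 * (∑ j ∈ Finset.Ioc 0 n, (m j : ℝ))) := by
    have hper : ∀ j ∈ Finset.Ioc 0 n,
        ((m j : ℝ) ^ 3 - (m j : ℝ)) * s₀ / 24 - (m j : ℝ) * (x j - ξ j) ^ 2 / (2 * s₀)
          = s₀ / 24 * (m j : ℝ) ^ 3 - s₀ / 24 * (m j : ℝ)
            - s₀ / 2 * ((m j : ℝ) * φ j ^ 2) + s₀ * v * ((m j : ℝ) * φ j)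
            - s₀ / 2 * v ^ 2 * (m j : ℝ) := by
      intro j hj
      have hd : x j - ξ j = (v - φ j) * s₀ := by rw [hξ j]; ring
      rw [hd]
      field_simp
      ring
    rw [Finset.sum_congr rfl hper]
    simp only [Finset.sum_sub_distrib, Finset.sum_add_distrib, ← Finset.mul_sum]
    rw [hlin]
    have h3 : ∑ j ∈ Finset.Ioc 0 n, (m j : ℝ) ^ 3
        = (∑ j ∈ Finset.Ioc 0 n, (m j : ℝ)) ^ 3
          - 12 * ∑ j ∈ Finset.Ioc 0 n, (m j : ℝ) * φ j ^ 2 := by linarith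
    rw [h3]
    ring
  -- merged total mass
  have hWm : ∑ j ∈ Finset.Ioc 0 (n - 1), (m' j : ℝ) = ∑ j ∈ Finset.Ioc 0 n, (m j : ℝ) := by
    refine merge_sum n k hk1 hk2 _ _ ?_ ?_ ?_
    · intro l h1 h2; rw [hm'lo l h1 h2]
    · rw [hm'k]; push_cast; ring
    · intro l h1 h2; rw [hm'hi l h1 h2]
  -- merged first moment
  have hSxm : ∑ j ∈ Finset.Ioc 0 (n - 1), (m' j : ℝ) * x' j
      = (∑ j ∈ Finset.Ioc 0 n, (m j : ℝ) * x j) * (t - s₀) / t := by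
    have h1 : ∑ j ∈ Finset.Ioc 0 (n - 1), (m' j : ℝ) * x' j
        = ∑ j ∈ Finset.Ioc 0 n, (m j : ℝ) * ξ j := by
      refine merge_sum n k hk1 hk2 _ _ ?_ ?_ ?_
      · intro l ha hb; rw [hm'lo l ha hb, hx'lo l ha (by omega)]
      · rw [hm'k, hx'lo k hk1 le_rfl, hξk]; push_cast; ring
      · intro l ha hb; rw [hm'hi l ha hb, hx'hi l ha hb]
    rw [h1]
    have h2 : ∀ j ∈ Finset.Ioc 0 n, (m j : ℝ) * ξ j
        = (m j : ℝ) * x j + s₀ * ((m j : ℝ) * φ j) - s₀ * v * (m j : ℝ) := by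
      intro j hj; rw [hξ j]; ring
    rw [Finset.sum_congr rfl h2]
    simp only [Finset.sum_sub_distrib, Finset.sum_add_distrib, ← Finset.mul_sum]
    rw [hlin, hv, icc_one]
    field_simp
    ring
  -- the weighted φ-moment of the merged configuration
  have hAm : ∑ l ∈ Finset.Ioc 0 (n - 1),
        (m' l : ℝ) * ((T' (n - 1) - T' l - T' (l - 1)) / 2) * x' l
      = ∑ l ∈ Finset.Ioc 0 n, (m l : ℝ) * φ l * ξ l := by
    refine merge_sum n k hk1 hk2 _ _ ?_ ?_ ?_
    · intro l ha hb
      rw [hWT', hT'lt l hb, hT'lt (l - 1) (by omega), hx'lo l ha (by omega),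
        hm'lo l ha hb, ← hφT l ha (by omega)]
    · rw [hWT', hT'ge k le_rfl (by omega), hT'lt (k - 1) (by omega),
        hx'lo k hk1 le_rfl, hm'k, hξk,
        hφT k hk1 (by omega), hφT (k + 1) (by omega) hk2]
      simp only [Nat.add_sub_cancel]
      have e1 := hstep (k + 1) (by omega)
      have e2 := hstep k hk1
      simp only [Nat.add_sub_cancel] at e1
      rw [e1, e2]
      push_cast
      ring
    · intro l ha hb
      have h1 : T' (l - 1) = T l := by
        have h := hT'ge (l - 1) (by omega) (by omega)
        rwa [show l - 1 + 1 = l by omega] at h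
      rw [hWT', hT'ge l (le_of_lt ha) hb, h1, hx'hi l ha hb, hm'hi l ha hb,
        hφT (l + 1) (by omega) (by omega)]
      simp only [Nat.add_sub_cancel]
  -- the n-side pair moment, and ξ-expansion
  have hA : ∑ l ∈ Finset.Ioc 0 n, (m l : ℝ) * ((T n - T l - T (l - 1)) / 2) * x l
      = ∑ l ∈ Finset.Ioc 0 n, (m l : ℝ) * φ l * x l := by
    refine Finset.sum_congr rfl fun l hl => ?_
    have hb := Finset.mem_Ioc.mp hl
    rw [hφT l (by omega) hb.2]
  have hAξ : ∑ l ∈ Finset.Ioc 0 n, (m l : ℝ) * φ l * ξ l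
      = (∑ l ∈ Finset.Ioc 0 n, (m l : ℝ) * φ l * x l)
        + s₀ * ∑ j ∈ Finset.Ioc 0 n, (m j : ℝ) * φ j ^ 2 := by
    have h2 : ∀ l ∈ Finset.Ioc 0 n, (m l : ℝ) * φ l * ξ l
        = (m l : ℝ) * φ l * x l + s₀ * ((m l : ℝ) * φ l ^ 2)
          - s₀ * v * ((m l : ℝ) * φ l) := by
      intro l hl; rw [hξ l]; ring
    rw [Finset.sum_congr rfl h2]
    simp only [Finset.sum_sub_distrib, Finset.sum_add_distrib, ← Finset.mul_sum]
    rw [hlin]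
    ring
  -- assemble
  simp only [oneClusterGamma, icc_one]
  rw [pair_sum (fun i => (m' i : ℝ)) x' (n - 1) T' hT',
    pair_sum (fun i => (m i : ℝ)) x n T hT,
    hA, hAm, hAξ, hWm, hfirst, hSxm, hv, icc_one]
  field_simp
  ring
end
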